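/- arXiv:1301.5162 — 8 statements merged into one kernel-verified Lean document; each statement's English description precedes it below -/
import Mathlib

section
/- Let μ and ν be Borel probability measures on [0,1] that vanish on singletons (μ({x}) = ν({x}) = 0 for every x ∈ [0,1]), and suppose there exist disjoint Borel sets B, C ⊆ [0,1] with μ(B) = 1 and ν(C) = 1. Let F_μ(t) = μ([0,t]) and F_ν(t) = ν([0,t]) for t ∈ [0,1]. Then the total variation of F_μ − F_ν over [0,1] equals 2. -/
/-!
`F_μ - F_ν` has variation at most `1 + 1`, the variations of the two monotone distribution
functions. Conversely, approximate `B` and `C` from inside by compact sets `K` and `L` up to `ε`.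
These lie at a positive distance `r`, so each cell `I = (t, t']` of a partition of `[0,1]` of mesh
below `r` misses `K` or `L`, and then `min (μ I) (ν I) ≤ μ (I \ K) + ν (I \ L)`. Summing
`|μ I - ν I| = μ I + ν I - 2 min (μ I) (ν I)` over the cells, which cover `(0,1]`, a set of full
measure since there are no atoms, the increments of `F_μ - F_ν` add up to at least `2 - 4ε`.
-/

open MeasureTheory Set

open scoped NNReal ENNReal

theorem eVariationOn.sub_le_add {α E : Type*} [LinearOrder α] [SeminormedAddCommGroup E]
    (f g : α → E) (s : Set α) :
    eVariationOn (f - g) s ≤ eVariationOn f s + eVariationOn g s := by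
  refine iSup_le fun ⟨n, u, hu, us⟩ => ?_
  calc ∑ i ∈ Finset.range n, edist ((f - g) (u (i + 1))) ((f - g) (u i))
      ≤ ∑ i ∈ Finset.range n,
          (edist (f (u (i + 1))) (f (u i)) + edist (g (u (i + 1))) (g (u i))) := by
        refine Finset.sum_le_sum fun i _ => ?_
        simp only [Pi.sub_apply, edist_dist]
        rw [← ENNReal.ofReal_add dist_nonneg dist_nonneg]
        exact ENNReal.ofReal_le_ofReal (dist_sub_sub_le _ _ _ _)
    _ ≤ eVariationOn f s + eVariationOn g s := by
        rw [Finset.sum_add_distrib]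
        exact add_le_add (eVariationOn.sum_le hu us) (eVariationOn.sum_le hu us)

theorem eVariationOn.ofReal_sum_abs_sub_le {α : Type*} [LinearOrder α] {f : α → ℝ} {s : Set α}
    {u : ℕ → α} (hu : Monotone u) {n : ℕ} (us : ∀ i ∈ Icc 0 n, u i ∈ s) :
    ENNReal.ofReal (∑ i ∈ Finset.range n, |f (u (i + 1)) - f (u i)|) ≤ eVariationOn f s := by
  rw [ENNReal.ofReal_sum_of_nonneg fun i _ => abs_nonneg _, Finset.range_eq_Ico]
  simpa only [edist_dist, Real.dist_eq] using
    eVariationOn.sum_le_of_monotoneOn_Icc (f := f) (hu.monotoneOn _) us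

namespace MeasureTheory

variable {α : Type*} [MeasurableSpace α]

theorem min_measureReal_le_of_disjoint_or_disjoint (μ ν : Measure α) {I K L : Set α}
    (h : Disjoint I K ∨ Disjoint I L) :
    min (μ.real I) (ν.real I) ≤ μ.real (I \ K) + ν.real (I \ L) := by
  rcases h with h | h <;> rw [h.sdiff_eq_left]
  · exact (min_le_left _ _).trans (le_add_of_nonneg_right measureReal_nonneg)
  · exact (min_le_right _ _).trans (le_add_of_nonneg_left measureReal_nonneg)

theorem sum_measureReal_sdiff_le_measureReal_compl (μ : Measure α) [IsFiniteMeasure μ]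
    {ι : Type*} {s : Finset ι} {I : ι → Set α} (hI : ∀ i ∈ s, MeasurableSet (I i))
    (hdisj : (s : Set ι).PairwiseDisjoint I) (K : Set α) :
    ∑ i ∈ s, μ.real (I i \ K) ≤ μ.real Kᶜ := by
  have h := sum_measureReal_le_measureReal_univ (μ := μ.restrict Kᶜ) hI hdisj
  rwa [measureReal_restrict_apply_univ, Finset.sum_congr rfl fun i hi =>
    measureReal_restrict_apply (hI i hi)] at h

theorem sum_measureReal_add_sub_le_sum_abs_sub (μ ν : Measure α) [IsFiniteMeasure μ]
    [IsFiniteMeasure ν] {ι : Type*} {s : Finset ι} {I : ι → Set α}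
    (hI : ∀ i ∈ s, MeasurableSet (I i)) (hdisj : (s : Set ι).PairwiseDisjoint I) {K L : Set α}
    (hsep : ∀ i ∈ s, Disjoint (I i) K ∨ Disjoint (I i) L) :
    ∑ i ∈ s, (μ.real (I i) + ν.real (I i)) - 2 * (μ.real Kᶜ + ν.real Lᶜ) ≤
      ∑ i ∈ s, |μ.real (I i) - ν.real (I i)| := by
  have hmin : ∑ i ∈ s, min (μ.real (I i)) (ν.real (I i)) ≤ μ.real Kᶜ + ν.real Lᶜ :=
    (Finset.sum_le_sum fun i hi => min_measureReal_le_of_disjoint_or_disjoint μ ν (hsep i hi)).trans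
      (Finset.sum_add_distrib.trans_le (add_le_add
        (sum_measureReal_sdiff_le_measureReal_compl μ hI hdisj K)
        (sum_measureReal_sdiff_le_measureReal_compl ν hI hdisj L)))
  have habs : ∀ a b : ℝ, |a - b| = a + b - 2 * min a b := fun a b => by
    rw [abs_sub_comm, ← max_sub_min_eq_abs, ← min_add_max a b]
    ring
  simp only [habs, Finset.sum_sub_distrib, ← Finset.mul_sum]
  linarith

section Interval

variable [LinearOrder α] {μ ν : Measure α} [IsFiniteMeasure μ] [IsFiniteMeasure ν]

theorem eVariationOn_measureReal_Icc_le (a b : α) :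
    eVariationOn (fun t => μ.real (Icc a t)) (Icc a b) ≤ μ (Icc a b) := by
  rcases le_or_gt a b with hab | hab
  · have hmono : MonotoneOn (fun t => μ.real (Icc a t)) univ :=
      fun _ _ _ _ h => measureReal_mono (Icc_subset_Icc_right h)
    rw [← univ_inter (Icc a b), hmono.eVariationOn_eq (mem_univ a) (mem_univ b), univ_inter,
      ← ofReal_measureReal]
    exact ENNReal.ofReal_le_ofReal (sub_le_self _ measureReal_nonneg)
  · simp [Icc_eq_empty_of_lt hab, eVariationOn.subsingleton]

variable [TopologicalSpace α] [OrderClosedTopology α] [OpensMeasurableSpace α]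

theorem measureReal_Icc_sub_measureReal_Icc {a b c : α} (hab : a ≤ b) (hbc : b ≤ c) :
    μ.real (Icc a c) - μ.real (Icc a b) = μ.real (Ioc b c) := by
  rw [← Icc_union_Ioc_eq_Icc hab hbc,
    measureReal_union (disjoint_left.2 fun _ hx hx' => hx'.1.not_ge hx.2) measurableSet_Ioc]
  ring

theorem ofReal_measureReal_Ioc_add_sub_le_eVariationOn {u : ℕ → α} (hu : Monotone u) {n : ℕ}
    {K L : Set α}
    (hsep : ∀ i < n, Disjoint (Ioc (u i) (u (i + 1))) K ∨ Disjoint (Ioc (u i) (u (i + 1))) L) :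
    ENNReal.ofReal (μ.real (Ioc (u 0) (u n)) + ν.real (Ioc (u 0) (u n)) -
        2 * (μ.real Kᶜ + ν.real Lᶜ)) ≤
      eVariationOn (fun t => μ.real (Icc (u 0) t) - ν.real (Icc (u 0) t)) (Icc (u 0) (u n)) := by
  have hincr : ∀ (ρ : Measure α) [IsFiniteMeasure ρ] (i : ℕ),
      ρ.real (Icc (u 0) (u (i + 1))) - ρ.real (Icc (u 0) (u i)) = ρ.real (Ioc (u i) (u (i + 1))) :=
    fun ρ _ i => measureReal_Icc_sub_measureReal_Icc (hu i.zero_le) (hu i.le_succ)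
  have htotal : ∀ (ρ : Measure α) [IsFiniteMeasure ρ],
      ∑ i ∈ Finset.range n, ρ.real (Ioc (u i) (u (i + 1))) = ρ.real (Ioc (u 0) (u n)) := by
    intro ρ _
    simp only [← hincr ρ, Finset.sum_range_sub (fun i => ρ.real (Icc (u 0) (u i)))]
    exact measureReal_Icc_sub_measureReal_Icc le_rfl (hu n.zero_le)
  have hdisj : (↑(Finset.range n) : Set ℕ).PairwiseDisjoint fun i => Ioc (u i) (u (i + 1)) :=
    fun i _ j _ hij => by simpa only [Order.succ_eq_add_one] using
      hu.pairwise_disjoint_on_Ioc_succ hij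
  calc ENNReal.ofReal _
      ≤ ENNReal.ofReal (∑ i ∈ Finset.range n,
          |μ.real (Ioc (u i) (u (i + 1))) - ν.real (Ioc (u i) (u (i + 1)))|) := by
        refine ENNReal.ofReal_le_ofReal ?_
        rw [← htotal μ, ← htotal ν, ← Finset.sum_add_distrib]
        exact sum_measureReal_add_sub_le_sum_abs_sub μ ν (fun _ _ => measurableSet_Ioc) hdisj
          fun i hi => hsep i (Finset.mem_range.1 hi)
    _ ≤ _ := by
        refine le_of_eq_of_le ?_ (eVariationOn.ofReal_sum_abs_sub_le hu fun i hi =>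
          ⟨hu hi.1, hu hi.2⟩)
        simp only [← hincr]
        congr 2 with i
        ring_nf

end Interval

theorem exists_isCompact_subset_measureReal_compl_le [TopologicalSpace α] [T2Space α]
    [OpensMeasurableSpace α] {μ : Measure α} [IsFiniteMeasure μ] [μ.InnerRegularCompactLTTop]
    {B : Set α} (hB : MeasurableSet B) (hBc : μ Bᶜ = 0) {ε : ℝ} (hε : 0 < ε) :
    ∃ K ⊆ B, IsCompact K ∧ μ.real Kᶜ ≤ ε := by
  obtain ⟨K, hKB, hK, hlt⟩ :=
    hB.exists_isCompact_sdiff_lt (measure_ne_top μ B) (ENNReal.ofReal_pos.2 hε).ne'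
  refine ⟨K, hKB, hK, ENNReal.toReal_le_of_le_ofReal hε.le ?_⟩
  calc μ Kᶜ ≤ μ Bᶜ + μ (B \ K) :=
        (measure_mono fun x hx => by by_cases hxB : x ∈ B <;> simp_all).trans (measure_union_le _ _)
    _ ≤ ENNReal.ofReal ε := by rw [hBc, zero_add]; exact hlt.le

end MeasureTheory

theorem ENNReal.ofReal_le_of_forall_pos_ofReal_sub_le {a : ℝ} {b : ℝ≥0∞}
    (h : ∀ ε > 0, ENNReal.ofReal (a - ε) ≤ b) : ENNReal.ofReal a ≤ b := by
  refine ENNReal.le_of_forall_pos_le_add fun ε hε _ => ?_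
  calc ENNReal.ofReal a ≤ ENNReal.ofReal (a - ε) + ENNReal.ofReal ε := by
        simpa using ENNReal.ofReal_add_le (p := a - ε) (q := ε)
    _ ≤ b + ε := by rw [ENNReal.ofReal_coe_nnreal]; exact add_le_add (h ε hε) le_rfl

theorem Real.disjoint_Ioc_or_disjoint_Ioc_of_lt_edist {K L : Set ℝ} {r : ℝ≥0}
    (hKL : ∀ x ∈ K, ∀ y ∈ L, (r : ℝ≥0∞) < edist x y) {a b : ℝ} (hab : b - a ≤ r) :
    Disjoint (Ioc a b) K ∨ Disjoint (Ioc a b) L := by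
  by_contra! h
  obtain ⟨x, hxI, hxK⟩ := not_disjoint_iff.1 h.1
  obtain ⟨y, hyI, hyL⟩ := not_disjoint_iff.1 h.2
  have hxy : dist x y ≤ r :=
    (Real.dist_le_of_mem_Icc (Ioc_subset_Icc_self hxI) (Ioc_subset_Icc_self hyI)).trans hab
  exact (hKL x hxK y hyL).not_ge (edist_le_coe.2 (dist_le_coe.1 hxy))

theorem Real.ofReal_measureReal_Ioc_add_sub_le_eVariationOn_of_isCompact (μ ν : Measure ℝ)
    [IsFiniteMeasure μ] [IsFiniteMeasure ν] {K L : Set ℝ} (hK : IsCompact K) (hL : IsClosed L)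
    (hKL : Disjoint K L) :
    ENNReal.ofReal (μ.real (Ioc 0 1) + ν.real (Ioc 0 1) - 2 * (μ.real Kᶜ + ν.real Lᶜ)) ≤
      eVariationOn (fun t => μ.real (Icc 0 t) - ν.real (Icc 0 t)) (Icc 0 1) := by
  obtain ⟨r, hr, hsep⟩ := Metric.exists_pos_forall_lt_edist hK hL hKL
  obtain ⟨n, hn⟩ := exists_nat_one_div_lt hr
  have hu : Monotone fun i : ℕ => (i : ℝ) / (n + 1) := fun i j h =>
    div_le_div_of_nonneg_right (Nat.cast_le.2 h) n.cast_add_one_pos.le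
  have h := ofReal_measureReal_Ioc_add_sub_le_eVariationOn (μ := μ) (ν := ν) hu (n := n + 1)
    fun i _ => Real.disjoint_Ioc_or_disjoint_Ioc_of_lt_edist hsep (by
      rw [← sub_div, Nat.cast_succ, add_sub_cancel_left]; exact hn.le)
  simpa only [Nat.cast_zero, zero_div, Nat.cast_add_one,
    div_self (n.cast_add_one_ne_zero : (n : ℝ) + 1 ≠ 0)] using h

theorem totalVariation_eq_two_of_disjoint_supports_general
    (μ ν : Measure ℝ)
    (hμu : μ Set.univ = 1) (hνu : ν Set.univ = 1)
    (hμI : μ (Icc 0 1) = 1) (hνI : ν (Icc 0 1) = 1)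
    (hμs : ∀ x : ℝ, μ {x} = 0) (hνs : ∀ x : ℝ, ν {x} = 0)
    (B C : Set ℝ) (hB : MeasurableSet B) (hC : MeasurableSet C)
    (hBC : Disjoint B C)
    (hμB : μ B = 1) (hνC : ν C = 1) :
    eVariationOn (fun t => (μ (Icc 0 t)).toReal - (ν (Icc 0 t)).toReal) (Icc 0 1) = 2 := by
  have : IsProbabilityMeasure μ := ⟨hμu⟩
  have : IsProbabilityMeasure ν := ⟨hνu⟩
  have : NullSingletonClass μ := ⟨hμs⟩
  have : NullSingletonClass ν := ⟨hνs⟩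
  refine le_antisymm ?_ ?_
  · calc _ ≤ _ := eVariationOn.sub_le_add (fun t => μ.real (Icc 0 t)) (fun t => ν.real (Icc 0 t)) _
      _ ≤ μ (Icc 0 1) + ν (Icc 0 1) :=
        add_le_add (eVariationOn_measureReal_Icc_le 0 1) (eVariationOn_measureReal_Icc_le 0 1)
      _ = 2 := by rw [hμI, hνI]; norm_num
  have hμ1 : μ.real (Ioc 0 1) = 1 := by simp [measureReal_congr Ioc_ae_eq_Icc, measureReal_def, hμI]
  have hν1 : ν.real (Ioc 0 1) = 1 := by simp [measureReal_congr Ioc_ae_eq_Icc, measureReal_def, hνI]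
  simpa using ENNReal.ofReal_le_of_forall_pos_ofReal_sub_le (a := 2) fun ε hε => by
    obtain ⟨K, hKB, hK, hμK⟩ := exists_isCompact_subset_measureReal_compl_le hB
      ((prob_compl_eq_zero_iff hB).2 hμB) (by positivity : 0 < ε / 4)
    obtain ⟨L, hLC, hL, hνL⟩ := exists_isCompact_subset_measureReal_compl_le hC
      ((prob_compl_eq_zero_iff hC).2 hνC) (by positivity : 0 < ε / 4)
    refine (ENNReal.ofReal_le_ofReal ?_).trans
      (Real.ofReal_measureReal_Ioc_add_sub_le_eVariationOn_of_isCompact μ ν hK hL.isClosed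
        (hBC.mono hKB hLC))
    linarith

/-- If `μ`, `ν` are Borel probability measures on `[0,1]` vanishing on
singletons, with disjoint Borel supports `B`, `C` of full measure, then the total variation
of the difference `F_μ - F_ν` of their distribution functions over `[0,1]` equals `2`. -/
theorem totalVariation_eq_two_of_disjoint_supports
    (μ ν : Measure ℝ)
    (hμu : μ Set.univ = 1) (hνu : ν Set.univ = 1)
    (hμI : μ (Icc 0 1) = 1) (hνI : ν (Icc 0 1) = 1)
    (hμs : ∀ x : ℝ, μ {x} = 0) (hνs : ∀ x : ℝ, ν {x} = 0)
    (B C : Set ℝ) (hB : MeasurableSet B) (hC : MeasurableSet C)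
    (hBsub : B ⊆ Icc 0 1) (hCsub : C ⊆ Icc 0 1) (hBC : Disjoint B C)
    (hμB : μ B = 1) (hνC : ν C = 1) :
    eVariationOn (fun t => (μ (Icc 0 t)).toReal - (ν (Icc 0 t)).toReal) (Icc 0 1) = 2 :=
  totalVariation_eq_two_of_disjoint_supports_general μ ν hμu hνu hμI hνI hμs hνs B C hB hC hBC hμB
    hνC
end

section
/- Let k ≥ 1, let 0 < p_1 < p_2 < … < p_k < 1/2, let a_1, …, a_k be nonzero real numbers, and let μ_1, …, μ_k be Borel measures on [0,1] vanishing on singletons such that μ_i([0,1]) = 1 and, for every n ≥ 0 and j ∈ {0, …, 2^n − 1}, μ_i([2j/2^{n+1}, (2j+1)/2^{n+1}]) = p_i · μ_i([j/2^n, (j+1)/2^n]) and μ_i([(2j+1)/2^{n+1}, (2j+2)/2^{n+1}]) = (1 − p_i) · μ_i([j/2^n, (j+1)/2^n]). Let F_i(t) = μ_i([0,t]). Then the function f = ∑_{i=1}^k a_i F_i is not constant on any nondegenerate subinterval of [0,1]. -/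
open MeasureTheory Set

private lemma diff_toReal_aux (μ : Measure ℝ) (hfin : μ (Icc 0 1) ≠ ⊤)
    (hsing : ∀ z : ℝ, μ {z} = 0)
    {x y : ℝ} (hx : 0 ≤ x) (hxy : x ≤ y) (hy : y ≤ 1) :
    (μ (Icc 0 y)).toReal - (μ (Icc 0 x)).toReal = (μ (Icc x y)).toReal := by
  have hdisj : Disjoint (Icc (0:ℝ) x) (Ioc x y) := by
    apply Set.disjoint_left.mpr
    rintro z ⟨_, hz2⟩ ⟨hz3, _⟩
    exact absurd hz2 (not_le.mpr hz3)
  have hu : Icc (0:ℝ) x ∪ Ioc x y = Icc 0 y := Set.Icc_union_Ioc_eq_Icc hx hxy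
  have h1 : μ (Icc 0 y) = μ (Icc 0 x) + μ (Ioc x y) := by
    rw [← hu, measure_union hdisj measurableSet_Ioc]
  have h2 : μ (Icc x y) = μ (Ioc x y) := by
    rw [← Set.Ioc_insert_left hxy, Set.insert_eq,
      measure_union (by simp) measurableSet_Ioc, hsing, zero_add]
  have hfx : μ (Icc 0 x) ≠ ⊤ :=
    ne_top_of_le_ne_top hfin (measure_mono (Set.Icc_subset_Icc le_rfl (hxy.trans hy)))
  have hIoc : μ (Ioc x y) ≠ ⊤ := by
    refine ne_top_of_le_ne_top hfin (measure_mono ?_)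
    intro z hz
    exact ⟨hx.trans hz.1.le, hz.2.trans hy⟩
  rw [h1, ENNReal.toReal_add hfx hIoc, h2]
  ring

private lemma leftmost_aux (μ : Measure ℝ) (p : ℝ)
    (hsplit : ∀ n j : ℕ, j < 2^n →
      μ (Icc ((2*j : ℝ)/2^(n+1)) ((2*j+1 : ℝ)/2^(n+1)))
        = ENNReal.ofReal p * μ (Icc ((j : ℝ)/2^n) ((j+1 : ℝ)/2^n)))
    (n j : ℕ) (hj : j < 2^n) :
    ∀ m : ℕ, μ (Icc ((j : ℝ)*2^m/2^(n+m)) (((j:ℝ)*2^m+1)/2^(n+m)))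
      = ENNReal.ofReal p ^ m * μ (Icc ((j : ℝ)/2^n) ((j+1 : ℝ)/2^n)) := by
  intro m
  induction m with
  | zero => simp
  | succ m ih =>
    have hJ : j * 2^m < 2^(n+m) := by
      rw [pow_add]
      exact Nat.mul_lt_mul_of_lt_of_le hj le_rfl (pow_pos (by norm_num) m)
    have h := hsplit (n+m) (j*2^m) hJ
    push_cast at h
    rw [ih] at h
    have e1 : (j:ℝ)*2^(m+1) = 2*((j:ℝ)*2^m) := by ring
    have e2 : n + (m+1) = (n+m)+1 := rfl
    rw [e2, e1, h, pow_succ]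
    ring

private lemma dyadic_ne_aux (μ : Measure ℝ) (p : ℝ) (hp0 : 0 < p) (hp1 : p < 1)
    (hμ1 : μ (Icc 0 1) = 1)
    (hsplit : ∀ n j : ℕ, j < 2^n →
      μ (Icc ((2*j : ℝ)/2^(n+1)) ((2*j+1 : ℝ)/2^(n+1)))
        = ENNReal.ofReal p * μ (Icc ((j : ℝ)/2^n) ((j+1 : ℝ)/2^n)) ∧
      μ (Icc ((2*j+1 : ℝ)/2^(n+1)) ((2*j+2 : ℝ)/2^(n+1)))
        = ENNReal.ofReal (1-p) * μ (Icc ((j : ℝ)/2^n) ((j+1 : ℝ)/2^n))) :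
    ∀ n j : ℕ, j < 2^n →
      μ (Icc ((j : ℝ)/2^n) ((j+1 : ℝ)/2^n)) ≠ 0 ∧
      μ (Icc ((j : ℝ)/2^n) ((j+1 : ℝ)/2^n)) ≠ ⊤ := by
  intro n
  induction n with
  | zero =>
    intro j hj
    have hj0 : j = 0 := by omega
    subst hj0
    norm_num [hμ1]
  | succ n ih =>
    intro j hj
    rcases Nat.even_or_odd j with ⟨q, hq⟩ | ⟨q, hq⟩
    · have hq' : q < 2^n := by
        subst hq; rw [pow_succ] at hj; omega
      have h := (hsplit n q hq').1
      have ej : (j:ℝ) = 2*(q:ℝ) := by rw [hq]; push_cast; ring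
      rw [ej, h]
      refine ⟨mul_ne_zero ?_ (ih q hq').1, ENNReal.mul_ne_top ENNReal.ofReal_ne_top (ih q hq').2⟩
      simp [ENNReal.ofReal_eq_zero, not_le, hp0]
    · have hq' : q < 2^n := by
        subst hq; rw [pow_succ] at hj; omega
      have h := (hsplit n q hq').2
      have ej : (j:ℝ) = 2*(q:ℝ)+1 := by rw [hq]; push_cast; ring
      rw [ej, show (2*(q:ℝ)+1)+1 = 2*(q:ℝ)+2 from by ring, h]
      refine ⟨mul_ne_zero ?_ (ih q hq').1, ENNReal.mul_ne_top ENNReal.ofReal_ne_top (ih q hq').2⟩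
      simp only [ne_eq, ENNReal.ofReal_eq_zero, not_le]
      linarith

/-- With `p`, `a`, `μ` as in Statement 3, and the `μ i` additionally
vanishing on singletons, the linear combination `f = ∑ i, a i • F i` of the distribution
functions `F i (t) = μ i [0,t]` is not constant on any nondegenerate subinterval of `[0,1]`. -/
theorem lin_comb_bernoulli_distribution_functions_not_constant
    (k : ℕ) (hk : 1 ≤ k) (p a : Fin k → ℝ)
    (hp0 : ∀ i, 0 < p i) (hp2 : ∀ i, p i < 1/2) (hpmono : StrictMono p)
    (ha : ∀ i, a i ≠ 0)
    (μ : Fin k → Measure ℝ)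
    (hsing : ∀ i, ∀ x : ℝ, μ i {x} = 0)
    (hμ1 : ∀ i, μ i (Icc 0 1) = 1)
    (hsplit : ∀ i, ∀ n j : ℕ, j < 2^n →
      μ i (Icc ((2*j : ℝ)/2^(n+1)) ((2*j+1 : ℝ)/2^(n+1)))
        = ENNReal.ofReal (p i) * μ i (Icc ((j : ℝ)/2^n) ((j+1 : ℝ)/2^n)) ∧
      μ i (Icc ((2*j+1 : ℝ)/2^(n+1)) ((2*j+2 : ℝ)/2^(n+1)))
        = ENNReal.ofReal (1 - p i) * μ i (Icc ((j : ℝ)/2^n) ((j+1 : ℝ)/2^n))) :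
    ∀ c d : ℝ, 0 ≤ c → c < d → d ≤ 1 →
      ∃ x ∈ Icc c d, ∃ y ∈ Icc c d,
        ∑ i, a i * (μ i (Icc 0 x)).toReal ≠ ∑ i, a i * (μ i (Icc 0 y)).toReal := by
  intro c d hc hcd hd
  by_contra hcon
  push_neg at hcon
  obtain ⟨n, hn⟩ := pow_unbounded_of_one_lt (2/(d-c)) (one_lt_two (α := ℝ))
  have h2n : (0:ℝ) < 2^n := by positivity
  have hdc : 0 < d - c := by linarith
  rw [div_lt_iff₀ hdc] at hn
  set j : ℕ := ⌈c * 2^n⌉₊ with hjdef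
  have hj1 : c * 2^n ≤ (j:ℝ) := Nat.le_ceil _
  have hj2 : (j:ℝ) < c*2^n + 1 := Nat.ceil_lt_add_one (by positivity)
  set L : ℝ := (j:ℝ)/2^n with hLdef
  set R : ℝ := ((j:ℝ)+1)/2^n with hRdef
  have hcL : c ≤ L := by rw [hLdef, le_div_iff₀ h2n]; exact hj1
  have hRd : R < d := by rw [hRdef, div_lt_iff₀ h2n]; nlinarith
  have hjlt : j < 2^n := by
    have hcast : (j:ℝ) < ((2^n : ℕ) : ℝ) := by push_cast; nlinarith
    exact_mod_cast hcast
  have hLR : L ≤ R := by rw [hLdef, hRdef]; gcongr; linarith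
  have h0L : 0 ≤ L := by positivity
  have hR1 : R ≤ 1 := by linarith
  have hLmem : L ∈ Icc c d := ⟨hcL, by linarith⟩
  have key : ∀ m : ℕ, ∑ i, (a i * (μ i (Icc L R)).toReal) * p i ^ m = 0 := by
    intro m
    set y : ℝ := ((j:ℝ)*2^m+1)/2^(n+m) with hydef
    have h2m : (0:ℝ) < 2^m := by positivity
    have h2nm : (0:ℝ) < 2^(n+m) := by positivity
    have hLalt : L = (j:ℝ)*2^m/2^(n+m) := by
      rw [hLdef, pow_add, mul_div_mul_right _ _ h2m.ne']
    have hLy : L ≤ y := by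
      rw [hLalt, hydef]
      gcongr
      linarith
    have h1m : (1:ℝ) ≤ 2^m := one_le_pow₀ one_le_two
    have hyR : y ≤ R := by
      rw [hydef, hRdef, div_le_div_iff₀ h2nm h2n, pow_add]
      nlinarith [mul_nonneg h2n.le (sub_nonneg.mpr h1m), (Nat.cast_nonneg j : (0:ℝ) ≤ (j:ℝ))]
    have hymem : y ∈ Icc c d := ⟨le_trans hcL hLy, le_trans hyR hRd.le⟩
    have h0 := hcon L hLmem y hymem
    have hdiff : ∀ i, (μ i (Icc 0 y)).toReal - (μ i (Icc 0 L)).toReal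
        = p i ^ m * (μ i (Icc L R)).toReal := by
      intro i
      have hfin : μ i (Icc 0 1) ≠ ⊤ := by rw [hμ1 i]; exact ENNReal.one_ne_top
      rw [diff_toReal_aux (μ i) hfin (hsing i) h0L hLy (le_trans hyR hR1)]
      have hset : Icc L y = Icc ((j:ℝ)*2^m/2^(n+m)) (((j:ℝ)*2^m+1)/2^(n+m)) := by
        rw [hLalt, hydef]
      rw [hset, leftmost_aux (μ i) (p i) (fun n j hj => (hsplit i n j hj).1) n j hjlt m,
        ENNReal.toReal_mul, ENNReal.toReal_pow, ENNReal.toReal_ofReal (hp0 i).le,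
        ← hLdef, ← hRdef]
    have h0' : ∑ i, a i * ((μ i (Icc 0 y)).toReal - (μ i (Icc 0 L)).toReal) = 0 := by
      simp only [mul_sub, Finset.sum_sub_distrib]
      rw [h0, sub_self]
    calc ∑ i, (a i * (μ i (Icc L R)).toReal) * p i ^ m
        = ∑ i, a i * ((μ i (Icc 0 y)).toReal - (μ i (Icc 0 L)).toReal) :=
          Finset.sum_congr rfl (fun i _ => by rw [hdiff i]; ring)
      _ = 0 := h0'
  have hvand : (fun i => a i * (μ i (Icc L R)).toReal) = 0 :=
    Matrix.eq_zero_of_forall_pow_sum_mul_pow_eq_zero hpmono.injective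
      (fun mf => key (mf : ℕ))
  set i0 : Fin k := ⟨0, hk⟩ with hi0
  have hI := dyadic_ne_aux (μ i0) (p i0) (hp0 i0) (by linarith [hp2 i0]) (hμ1 i0)
    (fun n j hj => hsplit i0 n j hj) n j hjlt
  have hz := congrFun hvand i0
  simp only [Pi.zero_apply] at hz
  rw [← hLdef, ← hRdef] at hI
  exact (mul_ne_zero (ha i0) (ENNReal.toReal_ne_zero.mpr ⟨hI.1, hI.2⟩)) hz
end

section
/- For a dyadic rational t = ∑_{k=1}^n u_k/2^k ∈ [0,1) with digits u_k ∈ {0,1}, let ℓ_n(t) and r_n(t) denote the number of zeros and of ones among u_1, …, u_n. Let (μ_p)_{p ∈ (0,1/2)} be a family of Borel measures on [0,1], each vanishing on singletons, such that μ_p([t, t + 1/2^n]) = p^{ℓ_n(t)} (1−p)^{r_n(t)} for every such t and n ≥ 1, and every p ∈ (0,1/2). Let t_0 = i_0/2^{n_0} and t_1 = i_1/2^{n_1} be dyadic rationals in [0,1) with n_1 ≥ n_0, ℓ_{n_1}(t_1) ≥ ℓ_{n_0}(t_0) and r_{n_1}(t_1) ≥ r_{n_0}(t_0), and set I_0 =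 [t_0, t_0 + 1/2^{n_0}], I_1 = [t_1, t_1 + 1/2^{n_1}]. Then: (a) there exists j ∈ ℕ such that J = [j/2^{n_1}, (j+1)/2^{n_1}] ⊆ I_0 and μ_p(J) = μ_p(I_1) for every p ∈ (0,1/2); and (b) for all real α, β ∈ I_1 with α < β there exist α_1, β_1 ∈ I_0 with α_1 < β_1 and μ_p([α_1, β_1]) = μ_p([α, β]) for every p ∈ (0,1/2). -/
/-!
The measure of a dyadic interval depends only on its level and on its number of zero digits.
Appending to `u₀` first the missing zeros and then ones gives a word `w` of level `n₁` whose
dyadic interval lies in `I₀` and has the digit counts of `u₁`; this is (a). For (b) translate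
by `t(w) - t(u₁)`: halving dyadic intervals shows that `x ↦ μ_p [t, t + x]` takes the same
values for `t = t(u₁)` and `t = t(w)` at every dyadic `x ∈ [0, 2^-n₁]`, and both functions are
continuous because `μ_p` has no atoms, so they agree on the whole of `[0, 2^-n₁]`.
-/

open MeasureTheory Set Finset Filter Topology
open scoped ENNReal

noncomputable def binaryVal {n : ℕ} (u : Fin n → Bool) : ℝ :=
  ∑ k : Fin n, (if u k then (1:ℝ) else 0) / 2 ^ ((k : ℕ) + 1)

def dyadicIcc {n : ℕ} (u : Fin n → Bool) : Set ℝ :=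
  Icc (binaryVal u) (binaryVal u + 1 / 2 ^ n)

def numZeros {n : ℕ} (u : Fin n → Bool) : ℕ := (univ.filter fun k => u k = false).card

def numOnes {n : ℕ} (u : Fin n → Bool) : ℕ := (univ.filter fun k => u k = true).card

section Words

variable {n : ℕ}

lemma numZeros_add_numOnes (u : Fin n → Bool) : numZeros u + numOnes u = n := by
  simpa [numZeros, numOnes] using
    Finset.card_filter_add_card_filter_not (s := univ) (fun k => u k = false)

lemma numOnes_eq_of_numZeros_eq {u u' : Fin n → Bool} (h : numZeros u = numZeros u') :
    numOnes u = numOnes u' := by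
  have := numZeros_add_numOnes u
  have := numZeros_add_numOnes u'
  omega

@[simp]
lemma binaryVal_snoc_false (u : Fin n → Bool) :
    binaryVal (Fin.snoc u false : Fin (n + 1) → Bool) = binaryVal u := by
  simp [binaryVal, Fin.sum_univ_castSucc]

@[simp]
lemma binaryVal_snoc_true (u : Fin n → Bool) :
    binaryVal (Fin.snoc u true : Fin (n + 1) → Bool) = binaryVal u + 1 / 2 ^ (n + 1) := by
  simp [binaryVal, Fin.sum_univ_castSucc]

@[simp]
lemma numZeros_snoc_false (u : Fin n → Bool) :
    numZeros (Fin.snoc u false : Fin (n + 1) → Bool) = numZeros u + 1 := by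
  simp only [numZeros, card_filter, Fin.sum_univ_castSucc, Fin.snoc_castSucc, Fin.snoc_last]
  simp

@[simp]
lemma numZeros_snoc_true (u : Fin n → Bool) :
    numZeros (Fin.snoc u true : Fin (n + 1) → Bool) = numZeros u := by
  simp only [numZeros, card_filter, Fin.sum_univ_castSucc, Fin.snoc_castSucc, Fin.snoc_last]
  simp

lemma dyadicIcc_snoc_subset (u : Fin n → Bool) (b : Bool) :
    dyadicIcc (Fin.snoc u b : Fin (n + 1) → Bool) ⊆ dyadicIcc u := by
  have h : (1 : ℝ) / 2 ^ (n + 1) + 1 / 2 ^ (n + 1) = 1 / 2 ^ n := by rw [pow_succ]; ring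
  have h0 : (0 : ℝ) ≤ 1 / 2 ^ (n + 1) := by positivity
  cases b <;> simp only [dyadicIcc, binaryVal_snoc_false, binaryVal_snoc_true] <;>
    exact Icc_subset_Icc (by linarith) (by linarith)

lemma exists_binaryVal_eq_div (u : Fin n → Bool) : ∃ j : ℕ, binaryVal u = j / 2 ^ n := by
  refine ⟨∑ k : Fin n, if u k then 2 ^ (n - 1 - (k : ℕ)) else 0, ?_⟩
  rw [binaryVal]
  push_cast
  rw [Finset.sum_div]
  refine Finset.sum_congr rfl fun k _ => ?_
  cases u k
  · simp
  · rw [if_pos rfl, if_pos rfl, div_eq_div_iff (by positivity) (by positivity), one_mul,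
      ← pow_add]
    congr 1
    omega

lemma exists_extension {m : ℕ} (u : Fin m → Bool) {N a : ℕ} (h : m + a ≤ N) :
    ∃ w : Fin N → Bool, numZeros w = numZeros u + a ∧ dyadicIcc w ⊆ dyadicIcc u := by
  induction N, (show m ≤ N by omega) using Nat.le_induction generalizing a with
  | base => exact ⟨u, by omega, subset_rfl⟩
  | succ N hmN ih =>
    rcases Nat.lt_or_ge (m + a) (N + 1) with h | h
    · obtain ⟨w, hw, hwu⟩ := ih (a := a) (by omega)
      exact ⟨Fin.snoc w true, by simp [hw], (dyadicIcc_snoc_subset w true).trans hwu⟩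
    · obtain ⟨w, hw, hwu⟩ := ih (a := a - 1) (by omega)
      exact ⟨Fin.snoc w false, by simp [hw]; omega, (dyadicIcc_snoc_subset w false).trans hwu⟩

end Words

lemma measure_Icc_eq_add {ν : Measure ℝ} [NullSingletonClass ν] {a b c : ℝ} (hab : a ≤ b)
    (hbc : b ≤ c) : ν (Icc a c) = ν (Icc a b) + ν (Icc b c) := by
  rw [← Icc_union_Ioc_eq_Icc hab hbc,
    measure_union ((Set.Iic_disjoint_Ioc le_rfl).mono_left Set.Icc_subset_Iic_self)
      measurableSet_Ioc,
    measure_congr Ioc_ae_eq_Icc]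

lemma continuous_measure_Icc (ν : Measure ℝ) [IsFiniteMeasure ν] [NullSingletonClass ν]
    (a : ℝ) : Continuous fun x => ν (Icc a x) := by
  refine continuous_iff_continuousAt.2 fun x => ?_
  have hwindow : Tendsto (fun y => ν (Icc (x - |y - x|) (x + |y - x|))) (𝓝 x) (𝓝 0) := by
    refine (tendsto_measure_Icc ν x).comp ?_
    simpa using (continuous_sub_right x).abs.tendsto x
  have hcover : ∀ y, Icc a y ⊆ Icc a x ∪ Icc (x - |y - x|) (x + |y - x|) ∧
      Icc a x ⊆ Icc a y ∪ Icc (x - |y - x|) (x + |y - x|) := by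
    intro y
    constructor <;> intro z hz <;> simp only [Set.mem_union, Set.mem_Icc] at hz ⊢ <;>
      cases abs_cases (y - x) <;> grind
  refine (ENNReal.tendsto_nhds (measure_ne_top ν _)).2 fun ε hε => ?_
  filter_upwards [hwindow.eventually (gt_mem_nhds hε)] with y hy
  constructor
  · rw [tsub_le_iff_right]
    calc ν (Icc a x) ≤ ν (Icc a y) + ν (Icc (x - |y - x|) (x + |y - x|)) :=
          (measure_mono (hcover y).2).trans (measure_union_le _ _)
      _ ≤ ν (Icc a y) + ε := by gcongr
  · calc ν (Icc a y) ≤ ν (Icc a x) + ν (Icc (x - |y - x|) (x + |y - x|)) :=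
          (measure_mono (hcover y).1).trans (measure_union_le _ _)
      _ ≤ ν (Icc a x) + ε := by gcongr

lemma continuousOn_measure_Icc {ν : Measure ℝ} [NullSingletonClass ν] {a b : ℝ}
    (hfin : ν (Icc a b) ≠ ∞) : ContinuousOn (fun x => ν (Icc a x)) (Icc a b) := by
  have : IsFiniteMeasure (ν.restrict (Icc a b)) := isFiniteMeasure_restrict.2 hfin
  refine (continuous_measure_Icc (ν.restrict (Icc a b)) a).continuousOn.congr fun x hx => ?_
  dsimp only
  rw [Measure.restrict_apply measurableSet_Icc, Icc_inter_Icc, max_self, min_eq_left hx.2]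

lemma measure_Icc_translate_eq_of_eqOn {ν : Measure ℝ} [NullSingletonClass ν] {a a' L : ℝ}
    {D : Set ℝ} (hfin : ν (Icc a (a + L)) ≠ ∞) (hfin' : ν (Icc a' (a' + L)) ≠ ∞)
    (hDL : D ⊆ Icc 0 L) (hdense : Icc 0 L ⊆ closure D)
    (hD : EqOn (fun x => ν (Icc a (a + x))) (fun x => ν (Icc a' (a' + x))) D)
    {α β : ℝ} (hα : a ≤ α) (hαβ : α ≤ β) (hβ : β ≤ a + L) :
    ν (Icc (α + (a' - a)) (β + (a' - a))) = ν (Icc α β) := by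
  have hcont : ∀ b, ν (Icc b (b + L)) ≠ ∞ →
      ContinuousOn (fun x => ν (Icc b (b + x))) (Icc 0 L) :=
    fun b hb => (continuousOn_measure_Icc hb).comp (continuousOn_const.add continuousOn_id)
      fun x hx => ⟨by linarith [hx.1], by linarith [hx.2]⟩
  have hcdf := hD.of_subset_closure (hcont a hfin) (hcont a' hfin') hDL hdense
  have hαa := hcdf (x := α - a) ⟨by linarith, by linarith⟩
  have hβa := hcdf (x := β - a) ⟨by linarith, by linarith⟩
  simp only [add_sub_cancel, show ∀ x, a' + (x - a) = x + (a' - a) by intro; ring] at hαa hβa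
  have hfinα : ν (Icc a α) ≠ ∞ :=
    ne_top_of_le_ne_top hfin (measure_mono (Icc_subset_Icc le_rfl (by linarith)))
  rw [measure_Icc_eq_add hα hαβ, hαa,
    measure_Icc_eq_add (by linarith) (by linarith : α + (a' - a) ≤ β + (a' - a))] at hβa
  exact ((ENNReal.add_right_inj (hαa ▸ hfinα)).1 hβa).symm

def dyadicGrid (m : ℕ) : Set ℝ := {x | ∃ q j : ℕ, j ≤ 2 ^ q ∧ x = j / 2 ^ (m + q)}

lemma dyadicGrid_subset_Icc (m : ℕ) : dyadicGrid m ⊆ Icc 0 (1 / 2 ^ m) := by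
  rintro _ ⟨q, j, hj, rfl⟩
  refine ⟨by positivity, ?_⟩
  rw [div_le_div_iff₀ (by positivity) (by positivity), one_mul, pow_add]
  have : (j : ℝ) ≤ 2 ^ q := by exact_mod_cast hj
  nlinarith [pow_pos (two_pos : (0 : ℝ) < 2) m]

lemma Icc_subset_closure_dyadicGrid (m : ℕ) :
    Icc (0 : ℝ) (1 / 2 ^ m) ⊆ closure (dyadicGrid m) := by
  intro x ⟨hx0, hx1⟩
  refine Metric.mem_closure_iff.2 fun ε hε => ?_
  obtain ⟨q, hq⟩ := exists_pow_lt_of_lt_one hε (by norm_num : (1 / 2 : ℝ) < 1)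
  have h2 : (0 : ℝ) < 2 ^ (m + q) := by positivity
  have hxN : x * 2 ^ (m + q) ≤ 2 ^ q := by
    rw [pow_add, ← mul_assoc]
    have : x * 2 ^ m ≤ 1 := by rwa [le_div_iff₀ (by positivity)] at hx1
    nlinarith [pow_pos (two_pos : (0 : ℝ) < 2) q]
  set j := ⌊x * 2 ^ (m + q)⌋₊
  have hj : (j : ℝ) ≤ x * 2 ^ (m + q) := Nat.floor_le (by positivity)
  refine ⟨j / 2 ^ (m + q), ⟨q, j, ?_, rfl⟩, ?_⟩
  · exact_mod_cast hj.trans hxN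
  · have hj' : x * 2 ^ (m + q) < j + 1 := Nat.lt_floor_add_one _
    have hstep : (1 : ℝ) / 2 ^ (m + q) ≤ (1 / 2) ^ q := by
      rw [one_div_pow]
      gcongr
      · norm_num
      · omega
    rw [Real.dist_eq, abs_of_nonneg (by rw [sub_nonneg, div_le_iff₀ h2]; exact hj)]
    calc x - j / 2 ^ (m + q) < 1 / 2 ^ (m + q) := by
          rw [sub_lt_iff_lt_add, ← add_div, lt_div_iff₀ h2]; linarith
      _ < ε := hstep.trans_lt hq

lemma measure_Icc_binaryVal_add_eq_of_numZeros_eq {ν : Measure ℝ} [NullSingletonClass ν]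
    (hν : ∀ n ≥ 1, ∀ u u' : Fin n → Bool, numZeros u = numZeros u' →
      ν (dyadicIcc u) = ν (dyadicIcc u')) (q : ℕ) :
    ∀ {m : ℕ}, 1 ≤ m → ∀ w w' : Fin m → Bool, numZeros w = numZeros w' →
      ∀ j : ℕ, j ≤ 2 ^ q → ν (Icc (binaryVal w) (binaryVal w + j / 2 ^ (m + q)))
        = ν (Icc (binaryVal w') (binaryVal w' + j / 2 ^ (m + q))) := by
  induction q with
  | zero =>
    intro m hm w w' hww' j hj
    interval_cases j
    · simp [measure_singleton]
    · simpa [dyadicIcc] using hν m hm w w' hww'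
  | succ q ih =>
    intro m hm w w' hww' j hj
    rw [show m + (q + 1) = m + 1 + q by ring]
    rcases le_or_gt j (2 ^ q) with hjq | hjq
    · simpa using ih (by omega) (Fin.snoc w false) (Fin.snoc w' false) (by simp [hww']) j hjq
    obtain ⟨i, rfl⟩ : ∃ i, j = 2 ^ q + i := ⟨j - 2 ^ q, by omega⟩
    have hsplit : ∀ v : Fin m → Bool,
        ν (Icc (binaryVal v) (binaryVal v + ((2 ^ q + i : ℕ) : ℝ) / 2 ^ (m + 1 + q)))
          = ν (dyadicIcc (Fin.snoc v false : Fin (m + 1) → Bool))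
            + ν (Icc (binaryVal (Fin.snoc v true : Fin (m + 1) → Bool))
                (binaryVal (Fin.snoc v true : Fin (m + 1) → Bool) + i / 2 ^ (m + 1 + q))) := by
      intro v
      have hhalf : ((2 ^ q + i : ℕ) : ℝ) / 2 ^ (m + 1 + q)
          = 1 / 2 ^ (m + 1) + i / 2 ^ (m + 1 + q) := by
        rw [pow_add]; push_cast; field_simp
      have h0 : (0 : ℝ) ≤ 1 / 2 ^ (m + 1) := by positivity
      have h0' : (0 : ℝ) ≤ i / 2 ^ (m + 1 + q) := by positivity
      rw [hhalf, ← add_assoc,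
        measure_Icc_eq_add (b := binaryVal v + 1 / 2 ^ (m + 1)) (by linarith) (by linarith)]
      simp [dyadicIcc]
    rw [hsplit, hsplit,
      hν _ (by omega) (Fin.snoc w false) (Fin.snoc w' false) (by simp [hww']),
      ih (by omega) (Fin.snoc w true) (Fin.snoc w' true) (by simp [hww']) i (by omega)]

lemma measure_Icc_translate_eq_of_numZeros_eq {ν : Measure ℝ} [NullSingletonClass ν]
    (hν : ∀ n ≥ 1, ∀ u u' : Fin n → Bool, numZeros u = numZeros u' →
      ν (dyadicIcc u) = ν (dyadicIcc u'))
    {m : ℕ} (hm : 1 ≤ m) {w w' : Fin m → Bool} (hww' : numZeros w = numZeros w')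
    (hfin : ν (dyadicIcc w) ≠ ∞) (hfin' : ν (dyadicIcc w') ≠ ∞)
    {α β : ℝ} (hα : binaryVal w ≤ α) (hαβ : α ≤ β) (hβ : β ≤ binaryVal w + 1 / 2 ^ m) :
    ν (Icc (α + (binaryVal w' - binaryVal w)) (β + (binaryVal w' - binaryVal w)))
      = ν (Icc α β) :=
  measure_Icc_translate_eq_of_eqOn hfin hfin' (dyadicGrid_subset_Icc m)
    (Icc_subset_closure_dyadicGrid m)
    (by
      rintro _ ⟨q, j, hj, rfl⟩
      exact measure_Icc_binaryVal_add_eq_of_numZeros_eq hν q hm w w' hww' j hj)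
    hα hαβ hβ

theorem dyadic_interval_transfer_general
    (μ : ℝ → Measure ℝ)
    (hsing : ∀ p ∈ Ioo (0:ℝ) (1/2), ∀ x : ℝ, μ p {x} = 0)
    (hval : ∀ p ∈ Ioo (0:ℝ) (1/2), ∀ n : ℕ, 1 ≤ n → ∀ u : Fin n → Bool,
      μ p (Icc (∑ k : Fin n, (if u k then (1:ℝ) else 0) / 2 ^ ((k : ℕ) + 1))
            ((∑ k : Fin n, (if u k then (1:ℝ) else 0) / 2 ^ ((k : ℕ) + 1)) + 1 / 2 ^ n))
        = ENNReal.ofReal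
            (p ^ (univ.filter fun k : Fin n => u k = false).card *
              (1 - p) ^ (univ.filter fun k : Fin n => u k = true).card))
    (n₀ n₁ : ℕ) (hn₀ : 1 ≤ n₀)
    (u₀ : Fin n₀ → Bool) (u₁ : Fin n₁ → Bool)
    (hl : (univ.filter fun k : Fin n₀ => u₀ k = false).card
        ≤ (univ.filter fun k : Fin n₁ => u₁ k = false).card)
    (hr : (univ.filter fun k : Fin n₀ => u₀ k = true).card
        ≤ (univ.filter fun k : Fin n₁ => u₁ k = true).card)
    (t₀ t₁ : ℝ)
    (ht₀ : t₀ = ∑ k : Fin n₀, (if u₀ k then (1:ℝ) else 0) / 2 ^ ((k : ℕ) + 1))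
    (ht₁ : t₁ = ∑ k : Fin n₁, (if u₁ k then (1:ℝ) else 0) / 2 ^ ((k : ℕ) + 1)) :
    (∃ j : ℕ, Icc ((j : ℝ) / 2 ^ n₁) (((j : ℝ) + 1) / 2 ^ n₁) ⊆ Icc t₀ (t₀ + 1 / 2 ^ n₀) ∧
      ∀ p ∈ Ioo (0:ℝ) (1/2),
        μ p (Icc ((j : ℝ) / 2 ^ n₁) (((j : ℝ) + 1) / 2 ^ n₁))
          = μ p (Icc t₁ (t₁ + 1 / 2 ^ n₁))) ∧
    (∀ α β : ℝ, α ∈ Icc t₁ (t₁ + 1 / 2 ^ n₁) → β ∈ Icc t₁ (t₁ + 1 / 2 ^ n₁) → α < β →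
      ∃ α₁ β₁ : ℝ, α₁ ∈ Icc t₀ (t₀ + 1 / 2 ^ n₀) ∧ β₁ ∈ Icc t₀ (t₀ + 1 / 2 ^ n₀) ∧
        α₁ < β₁ ∧ ∀ p ∈ Ioo (0:ℝ) (1/2), μ p (Icc α₁ β₁) = μ p (Icc α β)) := by
  subst ht₀ ht₁
  change numZeros u₀ ≤ numZeros u₁ at hl
  change numOnes u₀ ≤ numOnes u₁ at hr
  have hlen₀ := numZeros_add_numOnes u₀
  have hlen₁ := numZeros_add_numOnes u₁
  have hn₁ : 1 ≤ n₁ := by omega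
  have hμ : ∀ p ∈ Ioo (0 : ℝ) (1 / 2), ∀ n ≥ 1, ∀ u : Fin n → Bool,
      μ p (dyadicIcc u) = ENNReal.ofReal (p ^ numZeros u * (1 - p) ^ numOnes u) := hval
  have hν : ∀ p ∈ Ioo (0 : ℝ) (1 / 2), ∀ n ≥ 1, ∀ u u' : Fin n → Bool,
      numZeros u = numZeros u' → μ p (dyadicIcc u) = μ p (dyadicIcc u') := by
    intro p hp n hn u u' huu'
    rw [hμ p hp n hn, hμ p hp n hn, huu', numOnes_eq_of_numZeros_eq huu']
  obtain ⟨w, hw, hwu₀⟩ :=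
    exists_extension u₀ (a := numZeros u₁ - numZeros u₀) (N := n₁) (by omega)
  replace hw : numZeros w = numZeros u₁ := by omega
  obtain ⟨j, hj⟩ := exists_binaryVal_eq_div w
  have hJ : Icc ((j : ℝ) / 2 ^ n₁) ((j + 1) / 2 ^ n₁) = dyadicIcc w := by
    rw [dyadicIcc, hj, add_div]
  refine ⟨⟨j, hJ ▸ hwu₀, fun p hp => hJ ▸ hν p hp n₁ hn₁ w u₁ hw⟩, ?_⟩
  rintro α β ⟨hα, -⟩ ⟨-, hβ⟩ hαβ
  change binaryVal u₁ ≤ α at hα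
  change β ≤ binaryVal u₁ + 1 / 2 ^ n₁ at hβ
  refine ⟨α + (binaryVal w - binaryVal u₁), β + (binaryVal w - binaryVal u₁),
    hwu₀ ⟨by linarith, by linarith⟩, hwu₀ ⟨by linarith, by linarith⟩, by linarith,
    fun p hp => ?_⟩
  have : NullSingletonClass (μ p) := ⟨hsing p hp⟩
  have hfin : ∀ u : Fin n₁ → Bool, μ p (dyadicIcc u) ≠ ∞ := fun u => by
    rw [hμ p hp n₁ hn₁]; exact ENNReal.ofReal_ne_top
  exact measure_Icc_translate_eq_of_numZeros_eq (hν p hp) hn₁ hw.symm (hfin u₁) (hfin w)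
    hα hαβ.le hβ

/-- Lemma 3 of the paper. Let `(μ p)` for `p ∈ (0,1/2)` be Borel measures
on `[0,1]` vanishing on singletons such that for each dyadic rational
`t = ∑ u k / 2^(k+1)` of level `n ≥ 1` one has
`μ p [t, t + 1/2^n] = p^(ℓ n t) * (1-p)^(r n t)`, where `ℓ n t`, `r n t` count the zeros and
ones among the binary digits of `t`. If `t₀`, `t₁` are dyadic rationals of levels
`n₀ ≤ n₁` with `ℓ(t₁) ≥ ℓ(t₀)` and `r(t₁) ≥ r(t₀)`, then (a) `I₀ = [t₀, t₀ + 1/2^n₀]`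
contains a dyadic interval `J` of level `n₁` with `μ p J = μ p I₁` for all `p`, and
(b) every subinterval `[α,β]` of `I₁ = [t₁, t₁ + 1/2^n₁]` has a translate `[α₁,β₁] ⊆ I₀`
with the same `μ p`-measure for all `p`. -/
theorem dyadic_interval_transfer
    (μ : ℝ → Measure ℝ)
    (hsing : ∀ p ∈ Ioo (0:ℝ) (1/2), ∀ x : ℝ, μ p {x} = 0)
    (hval : ∀ p ∈ Ioo (0:ℝ) (1/2), ∀ n : ℕ, 1 ≤ n → ∀ u : Fin n → Bool,
      μ p (Icc (∑ k : Fin n, (if u k then (1:ℝ) else 0) / 2 ^ ((k : ℕ) + 1))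
            ((∑ k : Fin n, (if u k then (1:ℝ) else 0) / 2 ^ ((k : ℕ) + 1)) + 1 / 2 ^ n))
        = ENNReal.ofReal
            (p ^ (univ.filter fun k : Fin n => u k = false).card *
              (1 - p) ^ (univ.filter fun k : Fin n => u k = true).card))
    (n₀ n₁ : ℕ) (hn₀ : 1 ≤ n₀) (hn : n₀ ≤ n₁)
    (u₀ : Fin n₀ → Bool) (u₁ : Fin n₁ → Bool)
    (hl : (univ.filter fun k : Fin n₀ => u₀ k = false).card
        ≤ (univ.filter fun k : Fin n₁ => u₁ k = false).card)
    (hr : (univ.filter fun k : Fin n₀ => u₀ k = true).card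
        ≤ (univ.filter fun k : Fin n₁ => u₁ k = true).card)
    (t₀ t₁ : ℝ)
    (ht₀ : t₀ = ∑ k : Fin n₀, (if u₀ k then (1:ℝ) else 0) / 2 ^ ((k : ℕ) + 1))
    (ht₁ : t₁ = ∑ k : Fin n₁, (if u₁ k then (1:ℝ) else 0) / 2 ^ ((k : ℕ) + 1)) :
    (∃ j : ℕ, Icc ((j : ℝ) / 2 ^ n₁) (((j : ℝ) + 1) / 2 ^ n₁) ⊆ Icc t₀ (t₀ + 1 / 2 ^ n₀) ∧
      ∀ p ∈ Ioo (0:ℝ) (1/2),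
        μ p (Icc ((j : ℝ) / 2 ^ n₁) (((j : ℝ) + 1) / 2 ^ n₁))
          = μ p (Icc t₁ (t₁ + 1 / 2 ^ n₁))) ∧
    (∀ α β : ℝ, α ∈ Icc t₁ (t₁ + 1 / 2 ^ n₁) → β ∈ Icc t₁ (t₁ + 1 / 2 ^ n₁) → α < β →
      ∃ α₁ β₁ : ℝ, α₁ ∈ Icc t₀ (t₀ + 1 / 2 ^ n₀) ∧ β₁ ∈ Icc t₀ (t₀ + 1 / 2 ^ n₀) ∧
        α₁ < β₁ ∧ ∀ p ∈ Ioo (0:ℝ) (1/2), μ p (Icc α₁ β₁) = μ p (Icc α β)) :=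
  dyadic_interval_transfer_general μ hsing hval n₀ n₁ hn₀ u₀ u₁ hl hr t₀ t₁ ht₀ ht₁
end

section
/- Let 𝓕 be a family of functions from [0,1] to ℝ and suppose there exists F ∈ 𝓕 such that f ∘ F ∈ 𝓕 \ {0} for every exponential like function f : ℝ → ℝ. Let H ⊆ ℝ be a set that is linearly independent over the rationals ℚ. Then for every n ≥ 1, all distinct r_1, …, r_n ∈ H, and every nonzero real polynomial P in n variables with zero constant term, the function x ↦ P(e^{r_1 F(x)}, e^{r_2 F(x)}, …, e^{r_n F(x)}) belongs to 𝓕 \ {0}. In particular, the functions x ↦ e^{r F(x)}, r ∈ H, are free generators of a subalgebra of ℝ^{[0,1]} contained in 𝓕 ∪ {0}. -/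
open Set

/-- `f : ℝ → ℝ` is exponential like (of some range `m ≥ 1`) if
`f x = ∑ i, a i * exp (β i * x)` with the `β i` distinct and nonzero and the `a i` nonzero. -/
def ExpLike (f : ℝ → ℝ) : Prop :=
  ∃ m : ℕ, 1 ≤ m ∧ ∃ a β : Fin m → ℝ,
    (∀ i, a i ≠ 0) ∧ (∀ i, β i ≠ 0) ∧ Function.Injective β ∧
    f = fun x => ∑ i, a i * Real.exp (β i * x)

/-!
Substituting `exp (r i * t)` for the variables turns each monomial `X^d` of `P` into
`exp ((∑ i, d i * r i) * t)`. Since the `r i` are linearly independent over `ℚ`, distinct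
exponent vectors `d` give distinct frequencies `∑ i, d i * r i`, and these are nonzero because
`P` has no constant term. Hence `t ↦ P(exp (r₁ t), …, exp (rₙ t))` is exponential like, and the
hypothesis on `F` applies to it.
-/

open MvPolynomial

theorem LinearIndependent.injective_nsmul_sum {ι V : Type*} [Fintype ι] [AddCommGroup V]
    [Module ℚ V] {r : ι → V} (hr : LinearIndependent ℚ r) :
    Function.Injective fun d : ι →₀ ℕ => ∑ i, d i • r i := by
  intro d d' h
  have hq := Fintype.linearIndependent_iffₛ.mp hr (fun i => (d i : ℚ)) (fun i => (d' i : ℚ))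
    (by simpa only [Nat.cast_smul_eq_nsmul] using h)
  ext i
  exact_mod_cast hq i

theorem expLike_finset_sum {α : Type*} {s : Finset α} (hs : s.Nonempty) {a β : α → ℝ}
    (ha : ∀ d ∈ s, a d ≠ 0) (hβ : ∀ d ∈ s, β d ≠ 0) (hinj : InjOn β s) :
    ExpLike fun x => ∑ d ∈ s, a d * Real.exp (β d * x) := by
  set e := s.equivFin.symm
  refine ⟨s.card, hs.card_pos, fun i => a (e i), fun i => β (e i),
    fun i => ha _ (e i).2, fun i => hβ _ (e i).2, fun i j h => ?_, ?_⟩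
  · exact e.injective (Subtype.ext (hinj (e i).2 (e j).2 h))
  · funext x
    rw [← Finset.sum_coe_sort s, ← e.sum_comp]

theorem eval_exp_mul_eq_sum {σ : Type*} [Fintype σ] (P : MvPolynomial σ ℝ) (r : σ → ℝ)
    (t : ℝ) : eval (fun i => Real.exp (r i * t)) P =
      ∑ d ∈ P.support, coeff d P * Real.exp ((∑ i, d i • r i) * t) := by
  rw [eval_eq']
  refine Finset.sum_congr rfl fun d _ => ?_
  rw [Finset.sum_mul, Real.exp_sum]
  congr 1
  refine Finset.prod_congr rfl fun i _ => ?_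
  rw [← Real.exp_nat_mul, nsmul_eq_mul, mul_assoc]

theorem expLike_eval_exp_mul {σ : Type*} [Fintype σ] {r : σ → ℝ}
    (hr : LinearIndependent ℚ r) {P : MvPolynomial σ ℝ} (hP : P ≠ 0) (hP0 : coeff 0 P = 0) :
    ExpLike fun t => eval (fun i => Real.exp (r i * t)) P := by
  have hinj := hr.injective_nsmul_sum
  simp_rw [eval_exp_mul_eq_sum]
  refine expLike_finset_sum (Finset.nonempty_iff_ne_empty.mpr (mt support_eq_empty.mp hP))
    (fun d hd => mem_support_iff.mp hd) (fun d hd hzero => ?_) hinj.injOn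
  have hd0 : d = 0 := hinj (by simpa only [Finsupp.coe_zero, Pi.zero_apply, zero_smul,
    Finset.sum_const_zero] using hzero)
  exact mem_support_iff.mp hd (hd0 ▸ hP0)

theorem strong_algebrability_criterion_general
    (𝓕 : Set (↥(Icc (0:ℝ) 1) → ℝ)) (F : ↥(Icc (0:ℝ) 1) → ℝ)
    (hcomp : ∀ f : ℝ → ℝ, ExpLike f → f ∘ F ∈ 𝓕 ∧ f ∘ F ≠ 0)
    (H : Set ℝ) (hH : LinearIndependent ℚ ((↑) : H → ℝ)) :
    ∀ n : ℕ, 1 ≤ n → ∀ r : Fin n → ℝ, (∀ i, r i ∈ H) → Function.Injective r →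
      ∀ P : MvPolynomial (Fin n) ℝ, P ≠ 0 → MvPolynomial.coeff 0 P = 0 →
        (fun x => MvPolynomial.eval (fun i => Real.exp (r i * F x)) P) ∈ 𝓕 ∧
        (fun x : ↥(Icc (0:ℝ) 1) =>
          MvPolynomial.eval (fun i => Real.exp (r i * F x)) P) ≠ 0 := by
  intro n _ r hr hrinj P hP hP0
  have hli : LinearIndependent ℚ r :=
    hH.comp (fun i => ⟨r i, hr i⟩) fun i j h => hrinj (congrArg Subtype.val h)
  exact hcomp _ (expLike_eval_exp_mul hli hP hP0)

/-- Proposition 1 of the paper, general criterion of strong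
`𝔠`-algebrability. If `𝓕` is a family of functions `[0,1] → ℝ` and `F ∈ 𝓕` satisfies
`f ∘ F ∈ 𝓕 \ {0}` for every exponential like `f`, then for any set `H ⊆ ℝ` linearly
independent over `ℚ`, every evaluation of a nonzero polynomial without constant term at
the functions `x ↦ exp (r i * F x)` (for distinct `r i ∈ H`) lies in `𝓕 \ {0}`; hence
these functions are free generators of a subalgebra of `ℝ^[0,1]` contained in `𝓕 ∪ {0}`. -/
theorem strong_algebrability_criterion
    (𝓕 : Set (↥(Icc (0:ℝ) 1) → ℝ)) (F : ↥(Icc (0:ℝ) 1) → ℝ) (hF : F ∈ 𝓕)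
    (hcomp : ∀ f : ℝ → ℝ, ExpLike f → f ∘ F ∈ 𝓕 ∧ f ∘ F ≠ 0)
    (H : Set ℝ) (hH : LinearIndependent ℚ ((↑) : H → ℝ)) :
    ∀ n : ℕ, 1 ≤ n → ∀ r : Fin n → ℝ, (∀ i, r i ∈ H) → Function.Injective r →
      ∀ P : MvPolynomial (Fin n) ℝ, P ≠ 0 → MvPolynomial.coeff 0 P = 0 →
        (fun x => MvPolynomial.eval (fun i => Real.exp (r i * F x)) P) ∈ 𝓕 ∧
        (fun x : ↥(Icc (0:ℝ) 1) =>
          MvPolynomial.eval (fun i => Real.exp (r i * F x)) P) ≠ 0 :=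
  strong_algebrability_criterion_general 𝓕 F hcomp H hH
end

section
/- Let f : [0,1] → ℝ be the restriction of an exponential like function of range m, i.e. f(x) = ∑_{i=1}^m a_i e^{β_i x} with distinct nonzero real numbers β_1, …, β_m and nonzero real numbers a_1, …, a_m. Then for every c ∈ ℝ, the set {x ∈ [0,1] : f(x) = c} has at most m elements. -/
/-!
Subtracting `c` turns `f - c` into an exponential sum with at most `m + 1` terms and still
distinct exponents, the new exponent being `0`. An exponential sum with `n + 1` terms has at
most `n` real zeros: multiplying by `exp (-β₀ x)` makes one exponent zero, differentiating kills
that term, and Rolle's theorem loses at most one zero per derivative.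
-/

open Set

noncomputable def expSum {ι : Type*} [Fintype ι] (a β : ι → ℝ) (x : ℝ) : ℝ :=
  ∑ i, a i * Real.exp (β i * x)

section expSum

variable {ι : Type*} [Fintype ι] (a β : ι → ℝ)

theorem hasDerivAt_expSum (x : ℝ) :
    HasDerivAt (expSum a β) (expSum (fun i => a i * β i) β x) x :=
  HasDerivAt.fun_sum fun i _ =>
    ((((hasDerivAt_id' x).const_mul (β i)).exp).const_mul (a i)).congr_deriv (by ring)

theorem differentiable_expSum : Differentiable ℝ (expSum a β) :=
  fun x => (hasDerivAt_expSum a β x).differentiableAt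

theorem deriv_expSum : deriv (expSum a β) = expSum (fun i => a i * β i) β :=
  funext fun x => (hasDerivAt_expSum a β x).deriv

theorem expSum_sub_const (b x : ℝ) :
    expSum a (fun i => β i - b) x = Real.exp (-(b * x)) * expSum a β x := by
  simp only [expSum, Finset.mul_sum]
  refine Finset.sum_congr rfl fun i _ => ?_
  rw [mul_left_comm, ← Real.exp_add]
  ring_nf

end expSum

/-- No differentiability is needed: `deriv g` is `0` wherever `g` is not differentiable. -/
theorem encard_zeros_le_encard_zeros_deriv_add_one {g : ℝ → ℝ} (hg : Continuous g) :
    {x | g x = 0}.encard ≤ {x | deriv g x = 0}.encard + 1 := by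
  obtain hinf | hfin := {x | deriv g x = 0}.infinite_or_finite
  · simp [hinf.encard_eq]
  by_contra! hlt
  obtain ⟨u, hu, hcard⟩ := exists_subset_encard_eq (Order.add_one_le_of_lt hlt)
  rw [hfin.encard_eq_coe_toFinset_card] at hcard
  lift u to Finset ℝ using finite_of_encard_eq_coe (k := hfin.toFinset.card + 2) hcard
  have hrolle : u.card ≤ hfin.toFinset.card + 1 := by
    refine Finset.card_le_of_interleaved fun x hx y hy hxy _ => ?_
    obtain ⟨z, hz, hz0⟩ := exists_deriv_eq_zero hxy hg.continuousOn
      ((hu hx).trans (hu hy).symm)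
    exact ⟨z, by simpa using hz0, hz⟩
  rw [encard_coe_eq_coe_finsetCard] at hcard
  norm_cast at hcard
  omega

theorem encard_expSum_zeros_le :
    ∀ (n : ℕ) (a β : Fin (n + 1) → ℝ), (∀ i, a i ≠ 0) → Function.Injective β →
      {x | expSum a β x = 0}.encard ≤ n
  | 0, a, β, ha, _ => by
    simp [expSum, ha 0, Real.exp_ne_zero]
  | n + 1, a, β, ha, hβ => by
    set γ : Fin (n + 2) → ℝ := fun i => β i - β 0
    have hzeros : {x | expSum a β x = 0} = {x | expSum a γ x = 0} := by
      ext x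
      simp [γ, expSum_sub_const, Real.exp_ne_zero]
    have hderiv : deriv (expSum a γ) =
        expSum (fun i : Fin (n + 1) => a i.succ * γ i.succ) (fun i => γ i.succ) := by
      ext x
      simp [deriv_expSum, expSum, Fin.sum_univ_succ, γ]
    have hderiv_zeros : {x | deriv (expSum a γ) x = 0}.encard ≤ n := by
      rw [hderiv]
      exact encard_expSum_zeros_le n _ _
        (fun i => mul_ne_zero (ha i.succ) (sub_ne_zero.2 (hβ.ne (Fin.succ_ne_zero i))))
        (fun i j hij => Fin.succ_injective _ (hβ (sub_left_inj.1 hij)))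
    calc {x | expSum a β x = 0}.encard
        ≤ {x | deriv (expSum a γ) x = 0}.encard + 1 := by
          rw [hzeros]
          exact encard_zeros_le_encard_zeros_deriv_add_one (differentiable_expSum a γ).continuous
      _ ≤ n + 1 := add_le_add_left hderiv_zeros 1

theorem expSum_sub_eq_expSum_cons {n : ℕ} (a β : Fin n → ℝ) (c x : ℝ) :
    expSum a β x - c = expSum (Fin.cons (-c) a) (Fin.cons 0 β) x := by
  simp only [expSum, Fin.sum_univ_succ, Fin.cons_zero, zero_mul, Real.exp_zero, mul_one,
    Fin.cons_succ]
  ring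

/-- Lemma 5 of the paper. An exponential like function of range `m`,
restricted to `[0,1]`, attains each value `c ∈ ℝ` at most `m` times. -/
theorem explike_preimage_card_le
    (m : ℕ) (hm : 1 ≤ m) (a β : Fin m → ℝ)
    (ha : ∀ i, a i ≠ 0) (hβ : ∀ i, β i ≠ 0) (hβinj : Function.Injective β)
    (f : ℝ → ℝ) (hf : ∀ x, f x = ∑ i, a i * Real.exp (β i * x)) (c : ℝ) :
    {x ∈ Icc (0:ℝ) 1 | f x = c}.Finite ∧ {x ∈ Icc (0:ℝ) 1 | f x = c}.ncard ≤ m := by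
  rw [← encard_le_coe_iff_finite_ncard_le]
  obtain rfl : f = expSum a β := funext hf
  rcases eq_or_ne c 0 with rfl | hc
  · obtain ⟨n, rfl⟩ := Nat.exists_eq_add_of_le' hm
    calc {x ∈ Icc (0:ℝ) 1 | expSum a β x = 0}.encard ≤ {x | expSum a β x = 0}.encard :=
          encard_le_encard fun x hx => hx.2
      _ ≤ n := encard_expSum_zeros_le n a β ha hβinj
      _ ≤ (n + 1 : ℕ) := Nat.cast_le.2 n.le_succ
  · calc {x ∈ Icc (0:ℝ) 1 | expSum a β x = c}.encard
        ≤ {x | expSum (Fin.cons (-c) a) (Fin.cons 0 β) x = 0}.encard :=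
          encard_le_encard fun x hx => by simp [← expSum_sub_eq_expSum_cons, hx.2]
      _ ≤ m := encard_expSum_zeros_le m _ _ (Fin.cases (neg_ne_zero.2 hc) ha)
          (Fin.cons_injective_iff.2 ⟨fun ⟨i, hi⟩ => hβ i hi, hβinj⟩)
end

section
/- Let F : [0,1] → [0,1] be a continuous, strictly increasing surjection whose derivative F′ exists and equals 0 Lebesgue-almost everywhere on [0,1], and let f : ℝ → ℝ be an exponential like function. Then f ∘ F : [0,1] → ℝ is strongly singular: it is continuous, of bounded variation, its derivative exists and equals 0 Lebesgue-almost everywhere on [0,1], and it is not constant on any nondegenerate subinterval of [0,1]. -/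
open MeasureTheory Set

/-!
`F` is continuous and monotone, so `f ∘ F` inherits continuity, bounded variation (`f` is
Lipschitz on the compact range of `F`) and, by the chain rule, the a.e. vanishing derivative.
On `[p, q]` the function `F` takes every value in `[F p, F q]`, a nondegenerate interval; an
exponential like `f` is real analytic, so if it were constant there it would be constant on `ℝ`,
contradicting the linear independence of the characters `x ↦ exp (β x)` once the constant is
read as the character of frequency `0`.
-/

theorem LocallyLipschitz.comp_boundedVariationOn {α E F : Type*} [LinearOrder α]
    [PseudoMetricSpace E] [PseudoMetricSpace F] {f : E → F} {g : α → E} {s : Set α} {t : Set E}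
    (hf : LocallyLipschitz f) (ht : IsCompact t) (hg : MapsTo g s t)
    (h : BoundedVariationOn g s) : BoundedVariationOn (f ∘ g) s :=
  let ⟨_, hK⟩ := hf.locallyLipschitzOn.exists_lipschitzOnWith_of_compact ht
  hK.comp_boundedVariationOn hg h

theorem MonotoneOn.boundedVariationOn_Icc {α : Type*} [LinearOrder α] {F : α → ℝ} {a b : α}
    (hF : MonotoneOn F (Icc a b)) (hab : a ≤ b) : BoundedVariationOn F (Icc a b) := by
  simpa using hF.locallyBoundedVariationOn a b (left_mem_Icc.2 hab) (right_mem_Icc.2 hab)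

/-- Packaged as a character of `ℝ` so that Dedekind's linear independence of characters
applies. -/
noncomputable def Real.expMulMonoidHom (b : ℝ) : Multiplicative ℝ →* ℝ where
  toFun x := Real.exp (b * x.toAdd)
  map_one' := by simp
  map_mul' x y := by simp [toAdd_mul, mul_add, Real.exp_add]

theorem Real.expMulMonoidHom_injective : Function.Injective Real.expMulMonoidHom := by
  intro b b' h
  simpa [Real.expMulMonoidHom] using DFunLike.congr_fun h (Multiplicative.ofAdd 1)

theorem Real.linearIndependent_exp_mul {ι : Type*} {β : ι → ℝ} (hβ : Function.Injective β) :
    LinearIndependent ℝ fun i (x : ℝ) => Real.exp (β i * x) :=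
  (linearIndependent_monoidHom (Multiplicative ℝ) ℝ).comp _
    (Real.expMulMonoidHom_injective.comp hβ)

namespace ExpLike

variable {f : ℝ → ℝ}

theorem analyticOnNhd (hf : ExpLike f) : AnalyticOnNhd ℝ f univ := by
  obtain ⟨m, -, a, β, -, -, -, rfl⟩ := hf
  intro x _
  exact Finset.analyticAt_fun_sum _ fun i _ =>
    analyticAt_const.mul ((analyticAt_const.mul analyticAt_id).rexp)

theorem contDiff (hf : ExpLike f) {n : WithTop ℕ∞} : ContDiff ℝ n f :=
  hf.analyticOnNhd.contDiff

theorem ne_const (hf : ExpLike f) (c : ℝ) : f ≠ fun _ => c := by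
  obtain ⟨m, hm, a, β, ha, hβ, hβinj, rfl⟩ := hf
  intro hc
  have hli := Real.linearIndependent_exp_mul (β := Fin.cons 0 β)
    (Fin.cons_injective_iff.2 ⟨fun ⟨i, hi⟩ => hβ i hi, hβinj⟩)
  have hsum : ∑ i, (Fin.cons (-c) a : Fin (m + 1) → ℝ) i •
      (fun x => Real.exp ((Fin.cons 0 β : Fin (m + 1) → ℝ) i * x)) = 0 := by
    funext x
    simpa [Fin.sum_univ_succ, neg_add_eq_zero] using (congrFun hc x).symm
  simpa using ha _ (Fintype.linearIndependent_iff.1 hli _ hsum (Fin.succ ⟨0, hm⟩))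

theorem exists_ne_of_lt (hf : ExpLike f) {u v : ℝ} (huv : u < v) :
    ∃ x ∈ Icc u v, ∃ y ∈ Icc u v, f x ≠ f y := by
  by_contra! hconst
  have hloc : f =ᶠ[nhds ((u + v) / 2)] fun _ => f u := by
    have hmid : Icc u v ∈ nhds ((u + v) / 2) := Icc_mem_nhds (by linarith) (by linarith)
    filter_upwards [hmid] with y hy
    exact hconst y hy u (left_mem_Icc.2 huv.le)
  exact hf.ne_const (f u) <|
    hf.analyticOnNhd.eq_of_eventuallyEq (fun _ _ => analyticAt_const) hloc

end ExpLike

theorem explike_comp_singular_is_stronglySingular_general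
    (F : ℝ → ℝ) (hFc : ContinuousOn F (Icc 0 1)) (hFm : StrictMonoOn F (Icc 0 1))
    (hF' : ∀ᵐ x ∂(volume.restrict (Icc (0:ℝ) 1)), HasDerivAt F 0 x)
    (f : ℝ → ℝ) (hf : ExpLike f) :
    ContinuousOn (f ∘ F) (Icc 0 1) ∧ BoundedVariationOn (f ∘ F) (Icc 0 1) ∧
    (∀ᵐ x ∂(volume.restrict (Icc (0:ℝ) 1)), HasDerivAt (f ∘ F) 0 x) ∧
    ∀ a b : ℝ, 0 ≤ a → a < b → b ≤ 1 →
      ∃ x ∈ Icc a b, ∃ y ∈ Icc a b, (f ∘ F) x ≠ (f ∘ F) y := by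
  have hf₁ : ContDiff ℝ 1 f := hf.contDiff
  refine ⟨hf₁.continuous.comp_continuousOn hFc, ?_, ?_, fun p q hp hpq hq => ?_⟩
  · exact hf₁.locallyLipschitz.comp_boundedVariationOn isCompact_Icc hFm.monotoneOn.mapsTo_Icc
      (hFm.monotoneOn.boundedVariationOn_Icc zero_le_one)
  · filter_upwards [hF'] with x hx
    simpa using ((hf₁.differentiable one_ne_zero).differentiableAt.hasDerivAt).comp x hx
  · have hsub : Icc p q ⊆ Icc 0 1 := Icc_subset_Icc hp hq
    obtain ⟨u, hu, v, hv, hne⟩ := hf.exists_ne_of_lt <|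
      hFm (hsub (left_mem_Icc.2 hpq.le)) (hsub (right_mem_Icc.2 hpq.le)) hpq
    obtain ⟨x, hx, rfl⟩ := intermediate_value_Icc hpq.le (hFc.mono hsub) hu
    obtain ⟨y, hy, rfl⟩ := intermediate_value_Icc hpq.le (hFc.mono hsub) hv
    exact ⟨x, hx, y, hy, hne⟩

/-- If `F : [0,1] → [0,1]` is a continuous strictly increasing surjection
with derivative `0` Lebesgue-a.e., and `f` is exponential like, then `f ∘ F` is strongly
singular: continuous, of bounded variation, with derivative existing and equal to `0`
Lebesgue-a.e. on `[0,1]`, and not constant on any nondegenerate subinterval of `[0,1]`. -/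
theorem explike_comp_singular_is_stronglySingular
    (F : ℝ → ℝ) (hFc : ContinuousOn F (Icc 0 1)) (hFm : StrictMonoOn F (Icc 0 1))
    (hFsurj : F '' Icc 0 1 = Icc 0 1)
    (hF' : ∀ᵐ x ∂(volume.restrict (Icc (0:ℝ) 1)), HasDerivAt F 0 x)
    (f : ℝ → ℝ) (hf : ExpLike f) :
    ContinuousOn (f ∘ F) (Icc 0 1) ∧ BoundedVariationOn (f ∘ F) (Icc 0 1) ∧
    (∀ᵐ x ∂(volume.restrict (Icc (0:ℝ) 1)), HasDerivAt (f ∘ F) 0 x) ∧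
    ∀ a b : ℝ, 0 ≤ a → a < b → b ≤ 1 →
      ∃ x ∈ Icc a b, ∃ y ∈ Icc a b, (f ∘ F) x ≠ (f ∘ F) y :=
  explike_comp_singular_is_stronglySingular_general F hFc hFm hF' f hf
end

section
/- Let F : [0,1] → [0,1] be a continuous, strictly increasing surjection whose derivative F′ exists and equals 0 Lebesgue-almost everywhere on [0,1], and let H ⊆ ℝ be a set of cardinality continuum, linearly independent over the rationals ℚ, that contains the terms of a sequence of nonzero reals converging to 0. Then the subalgebra 𝓐 of C([0,1], ℝ) generated by the functions x ↦ e^{r F(x)}, r ∈ H, is dense in C([0,1], ℝ) with respect to the supremum norm, and every nonzero element of 𝓐 is strongly singular. Consequently, the set of strongly singular functions is a densely strongly 𝔠-algebrable subset of C([0,1], ℝ). -/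
open MeasureTheory Set Filter

/-- A function `[0,1] → ℝ` is strongly singular if it is continuous, of bounded variation,
its derivative exists and is `0` Lebesgue-a.e. on `[0,1]`, and it is not constant on any
nondegenerate subinterval of `[0,1]`. -/
def StronglySingular (f : ℝ → ℝ) : Prop :=
  ContinuousOn f (Icc 0 1) ∧ BoundedVariationOn f (Icc 0 1) ∧
  (∀ᵐ x ∂(volume.restrict (Icc (0:ℝ) 1)), HasDerivAt f 0 x) ∧
  ∀ a b : ℝ, 0 ≤ a → a < b → b ≤ 1 → ∃ x ∈ Icc a b, ∃ y ∈ Icc a b, f x ≠ f y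

/-!
Every element of the algebra is `P ∘ F` for an exponential polynomial
`P t = ∑ cₛ exp (s t)` whose frequencies `s` are sums of elements of `H`; by `ℚ`-independence
no such sum vanishes, so `P` has no constant term. `P` is smooth, so `P ∘ F` inherits
continuity, bounded variation and `(P ∘ F)' = P'(F) F' = 0` a.e. from `F`. If `P ∘ F` were
constant on an interval, `P - c` would vanish on an interval, hence everywhere (analyticity),
and Dedekind's independence of the characters `t ↦ exp (s t)` forces `P = c = 0`.

Density is Stone–Weierstrass: one generator `exp (r F)` with `r ≠ 0` separates points, and
`exp (rₙ F) → 1` uniformly as `rₙ → 0`, so the closure of the non-unital algebra is unital.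
-/

noncomputable def expChar : Multiplicative ℝ →* (ℝ → ℝ) where
  toFun s t := Real.exp (s.toAdd * t)
  map_one' := by ext; simp
  map_mul' a b := by ext; simp [add_mul, Real.exp_add]

/-- Exponential polynomials `∑ cₛ exp (s t)`, encoded as elements of `ℝ[ℝ]`. -/
noncomputable def expPoly : AddMonoidAlgebra ℝ ℝ →ₐ[ℝ] (ℝ → ℝ) :=
  AddMonoidAlgebra.lift ℝ (ℝ → ℝ) ℝ expChar

theorem expPoly_apply (p : AddMonoidAlgebra ℝ ℝ) (t : ℝ) :
    expPoly p t = ∑ s ∈ p.coeff.support, p.coeff s * Real.exp (s * t) := by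
  simp [expPoly, AddMonoidAlgebra.lift_apply, Finsupp.sum, expChar]

theorem analyticOnNhd_expPoly (p : AddMonoidAlgebra ℝ ℝ) :
    AnalyticOnNhd ℝ (expPoly p) univ := by
  intro t _
  simp only [funext (expPoly_apply p)]
  fun_prop

theorem expPoly_injective : Function.Injective expPoly := by
  have hli : LinearIndependent ℝ fun s : ℝ => expChar (.ofAdd s) :=
    (linearIndependent_monoidHom (Multiplicative ℝ) ℝ).comp
      (fun s : ℝ => (⟨⟨fun t => Real.exp (s * t.toAdd), by simp⟩,
        fun a b => by simp [mul_add, Real.exp_add]⟩ : Multiplicative ℝ →* ℝ))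
      (fun a b h => by simpa using congrArg (fun χ : Multiplicative ℝ →* ℝ => χ (.ofAdd 1)) h)
  rw [injective_iff_map_eq_zero]
  intro p hp
  have hcoeff := linearIndependent_iff.mp hli p.coeff (by
    rw [Finsupp.linearCombination_apply, ← hp, expPoly, AddMonoidAlgebra.lift_apply])
  ext s
  simp [hcoeff]

theorem expPoly_eq_zero_of_eqOn_Ioo {p : AddMonoidAlgebra ℝ ℝ} {a b : ℝ} (hab : a < b)
    (hp : EqOn (expPoly p) 0 (Ioo a b)) : p = 0 := by
  refine expPoly_injective ((funext fun t => ?_).trans (map_zero expPoly).symm)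
  refine (analyticOnNhd_expPoly p).eqOn_zero_of_preconnected_of_eventuallyEq_zero
    isPreconnected_univ (mem_univ ((a + b) / 2)) ?_ (mem_univ t)
  exact eventuallyEq_of_mem (Ioo_mem_nhds (by linarith) (by linarith)) hp

theorem expPoly_exists_ne_of_lt {p : AddMonoidAlgebra ℝ ℝ} (hp : p ≠ 0) (hp0 : p.coeff 0 = 0)
    {a b : ℝ} (hab : a < b) : ∃ x ∈ Icc a b, ∃ y ∈ Icc a b, expPoly p x ≠ expPoly p y := by
  by_contra! hconst
  set c := expPoly p a
  have hc : p - algebraMap ℝ _ c = 0 := expPoly_eq_zero_of_eqOn_Ioo hab fun t ht => by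
    rw [map_sub, AlgHom.commutes, Pi.sub_apply, Pi.algebraMap_apply, Algebra.algebraMap_self,
      RingHom.id_apply, hconst t (Ioo_subset_Icc_self ht) a (left_mem_Icc.2 hab.le), sub_self,
      Pi.zero_apply]
  rw [sub_eq_zero] at hc
  have hc0 : c = 0 := by simpa [hc] using hp0
  exact hp (by simp [hc, hc0])

theorem AddMonoidAlgebra.support_subset_closure_of_mem_adjoin {k G : Type*} [CommSemiring k]
    [AddCommMonoid G] {s : Set G} {q : AddMonoidAlgebra k G}
    (hq : q ∈ NonUnitalAlgebra.adjoin k ((AddMonoidAlgebra.single · 1) '' s)) :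
    (q.coeff.support : Set G) ⊆ AddSubsemigroup.closure s := by
  classical
  induction hq using NonUnitalAlgebra.adjoin_induction with
  | mem x hx =>
    obtain ⟨r, hr, rfl⟩ := hx
    refine (Finset.coe_subset.2 Finsupp.support_single_subset).trans ?_
    simpa using AddSubsemigroup.subset_closure hr
  | zero => simp
  | add x y _ _ hx hy =>
    exact (Finset.coe_subset.2 Finsupp.support_add).trans (by simpa using ⟨hx, hy⟩)
  | mul x y _ _ hx hy =>
    refine (Finset.coe_subset.2 (AddMonoidAlgebra.support_coeff_mul_subset x y)).trans ?_
    rw [Finset.coe_add]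
    rintro _ ⟨a, ha, b, hb, rfl⟩
    exact add_mem (hx ha) (hy hb)
  | smul r x _ hx => exact (Finset.coe_subset.2 Finsupp.support_smul).trans hx

theorem LinearIndepOn.zero_notMem_addSubsemigroupClosure {K V : Type*} [Field K]
    [LinearOrder K] [IsStrictOrderedRing K] [AddCommGroup V] [Module K V] {s : Set V}
    (hs : LinearIndepOn K id s) : (0 : V) ∉ AddSubsemigroup.closure s := by
  let b := Module.Basis.extend hs
  -- a linear form equal to `1` on `s` is positive on the semigroup generated by `s`
  let φ : V →ₗ[K] K := b.constr K fun _ => 1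
  have hφ : ∀ x ∈ s, φ x = 1 := fun x hx => by
    simpa [b, Module.Basis.extend_apply_self] using
      b.constr_basis K (fun _ => (1 : K)) ⟨x, hs.subset_extend _ hx⟩
  have hpos : ∀ x ∈ AddSubsemigroup.closure s, 0 < φ x := by
    intro x hx
    induction hx using AddSubsemigroup.closure_induction with
    | mem x hx => simp [hφ x hx]
    | add x y _ _ hx hy => rw [map_add]; exact add_pos hx hy
  exact fun h0 => (hpos 0 h0).ne' (map_zero φ)

theorem StrictMonoOn.stronglySingular {F : ℝ → ℝ} (hFm : StrictMonoOn F (Icc 0 1))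
    (hFc : ContinuousOn F (Icc 0 1))
    (hF' : ∀ᵐ x ∂(volume.restrict (Icc (0:ℝ) 1)), HasDerivAt F 0 x) : StronglySingular F := by
  refine ⟨hFc, hFm.monotoneOn.boundedVariationOn (C := max |F 0| |F 1|) fun x hx => ?_, hF',
    fun a b ha hab hb => ⟨a, left_mem_Icc.2 hab.le, b, right_mem_Icc.2 hab.le,
      (hFm ⟨ha, hab.le.trans hb⟩ ⟨ha.trans hab.le, hb⟩ hab).ne⟩⟩
  exact abs_le_max_abs_abs (hFm.monotoneOn (left_mem_Icc.2 zero_le_one) hx hx.1)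
    (hFm.monotoneOn hx (right_mem_Icc.2 zero_le_one) hx.2)

theorem StronglySingular.comp {P F : ℝ → ℝ} (hF : StronglySingular F)
    (hFI : MapsTo F (Icc 0 1) (Icc 0 1)) (hP : ContDiff ℝ 1 P)
    (hPc : ∀ a b, a < b → ∃ x ∈ Icc a b, ∃ y ∈ Icc a b, P x ≠ P y) :
    StronglySingular (P ∘ F) := by
  obtain ⟨hFc, hFbv, hF', hFnc⟩ := hF
  refine ⟨hP.continuous.comp_continuousOn hFc, ?_, ?_, fun a b ha hab hb => ?_⟩
  · obtain ⟨K, hK⟩ :=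
      hP.contDiffOn.exists_lipschitzOnWith one_ne_zero (convex_Icc 0 1) isCompact_Icc
    exact hK.comp_boundedVariationOn hFI hFbv
  · filter_upwards [hF'] with x hx
    simpa using ((hP.differentiable one_ne_zero) (F x)).hasDerivAt.comp x hx
  · obtain ⟨u, hu, v, hv, huv⟩ := hFnc a b ha hab hb
    have hIVT : uIcc (F u) (F v) ⊆ F '' uIcc u v :=
      intermediate_value_uIcc (hFc.mono ((uIcc_subset_Icc hu hv).trans (Icc_subset_Icc ha hb)))
    obtain ⟨y, hy, z, hz, hyz⟩ := hPc _ _ (min_lt_max.2 huv)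
    obtain ⟨x, hx, rfl⟩ := hIVT hy
    obtain ⟨w, hw, rfl⟩ := hIVT hz
    exact ⟨x, uIcc_subset_Icc hu hv hx, w, uIcc_subset_Icc hu hv hw, hyz⟩

theorem NonUnitalSubalgebra.dense_of_separatesPoints_of_one_mem_closure
    {X : Type*} [TopologicalSpace X] [CompactSpace X] (A : NonUnitalSubalgebra ℝ C(X, ℝ))
    (hsep : ((⇑) '' (A : Set C(X, ℝ))).SeparatesPoints)
    (h1 : (1 : C(X, ℝ)) ∈ closure (A : Set C(X, ℝ))) : Dense (A : Set C(X, ℝ)) := by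
  let B : Subalgebra ℝ C(X, ℝ) := A.topologicalClosure.toSubmodule.toSubalgebra h1
    fun _ _ hx hy => A.topologicalClosure.mul_mem hx hy
  have hB : B.SeparatesPoints := fun x y hxy => by
    obtain ⟨_, ⟨f, hf, rfl⟩, hfxy⟩ := hsep hxy
    exact ⟨f, ⟨f, subset_closure hf, rfl⟩, hfxy⟩
  rw [dense_iff_closure_eq, ← closure_closure]
  exact congrArg SetLike.coe
    (ContinuousMap.subalgebra_topologicalClosure_eq_top_of_separatesPoints B hB)

noncomputable def expMul {X : Type*} [TopologicalSpace X] (f : C(X, ℝ)) : C(ℝ, C(X, ℝ)) :=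
  ContinuousMap.curry ⟨fun p : ℝ × X => Real.exp (p.1 * f p.2), by fun_prop⟩

theorem dense_adjoin_expMul {X : Type*} [TopologicalSpace X] [CompactSpace X] {f : C(X, ℝ)}
    (hf : Function.Injective f) {H : Set ℝ}
    (hH : ∃ r : ℕ → ℝ, (∀ n, r n ∈ H ∧ r n ≠ 0) ∧ Tendsto r atTop (nhds 0)) :
    Dense (NonUnitalAlgebra.adjoin ℝ (expMul f '' H) : Set C(X, ℝ)) := by
  obtain ⟨r, hr, hr0⟩ := hH
  have hmem : ∀ n, expMul f (r n) ∈ NonUnitalAlgebra.adjoin ℝ (expMul f '' H) := fun n =>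
    NonUnitalAlgebra.subset_adjoin ℝ (mem_image_of_mem _ (hr n).1)
  refine NonUnitalSubalgebra.dense_of_separatesPoints_of_one_mem_closure _
    (fun x y hxy => ⟨_, mem_image_of_mem _ (hmem 0), fun h => hxy (hf ?_)⟩) ?_
  · simpa [expMul, (hr 0).2] using h
  · have hexp0 : expMul f 0 = 1 := by ext; simp [expMul]
    exact mem_closure_of_tendsto (hexp0 ▸ ((expMul f).continuous.tendsto 0).comp hr0)
      (Eventually.of_forall hmem)

def precompAlgHom (R A : Type*) [CommSemiring R] [Semiring A] [Algebra R A] {Y Z : Type*}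
    (u : Y → Z) : (Z → A) →ₐ[R] (Y → A) :=
  AlgHom.pi fun y => Pi.evalAlgHom R (fun _ => A) (u y)

@[simp]
theorem precompAlgHom_apply (R A : Type*) [CommSemiring R] [Semiring A] [Algebra R A]
    {Y Z : Type*} (u : Y → Z) (g : Z → A) : precompAlgHom R A u g = g ∘ u := rfl

theorem exists_expPoly_of_mem_adjoin {F : ℝ → ℝ} {H : Set ℝ} {g : ℝ → ℝ}
    (hg : g ∈ NonUnitalAlgebra.adjoin ℝ {g : ℝ → ℝ | ∃ r ∈ H, g = fun x => Real.exp (r * F x)}) :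
    ∃ p ∈ NonUnitalAlgebra.adjoin ℝ ((AddMonoidAlgebra.single · (1 : ℝ)) '' H),
      expPoly p ∘ F = g := by
  have hgens : {g : ℝ → ℝ | ∃ r ∈ H, g = fun x => Real.exp (r * F x)} =
      (precompAlgHom ℝ ℝ F).comp expPoly '' ((AddMonoidAlgebra.single · 1) '' H) := by
    ext g
    simp [expPoly, expChar, eq_comm, Function.comp_def]
  rw [hgens, ← NonUnitalAlgHom.map_adjoin] at hg
  exact hg

theorem exists_mem_adjoin_eqOn_of_mem_adjoin_expMul {F : ℝ → ℝ} {s : Set ℝ}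
    (hFc : ContinuousOn F s) {H : Set ℝ} {φ : C(s, ℝ)}
    (hφ : φ ∈ NonUnitalAlgebra.adjoin ℝ (expMul ⟨fun x : s => F x, hFc.domRestrict⟩ '' H)) :
    ∃ g ∈ NonUnitalAlgebra.adjoin ℝ {g : ℝ → ℝ | ∃ r ∈ H, g = fun x => Real.exp (r * F x)},
      ∀ x : s, g x = φ x := by
  have hgens : ContinuousMap.coeFnAlgHom ℝ '' (expMul ⟨fun x : s => F x, hFc.domRestrict⟩ '' H)
      = precompAlgHom ℝ ℝ ((↑) : s → ℝ) ''
        {g : ℝ → ℝ | ∃ r ∈ H, g = fun x => Real.exp (r * F x)} := by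
    ext g
    simp [eq_comm, Function.comp_def]
    rfl
  have hφ' : ⇑φ ∈ (NonUnitalAlgebra.adjoin ℝ _).map (ContinuousMap.coeFnAlgHom ℝ) := ⟨φ, hφ, rfl⟩
  rw [NonUnitalAlgHom.map_adjoin, hgens, ← NonUnitalAlgHom.map_adjoin] at hφ'
  obtain ⟨g, hg, hgφ⟩ := hφ'
  exact ⟨g, hg, fun x => congrFun hgφ x⟩

theorem stronglySingular_densely_strongly_c_algebrable_general
    (F : ℝ → ℝ) (hFc : ContinuousOn F (Icc 0 1)) (hFm : StrictMonoOn F (Icc 0 1))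
    (hFsurj : F '' Icc 0 1 = Icc 0 1)
    (hF' : ∀ᵐ x ∂(volume.restrict (Icc (0:ℝ) 1)), HasDerivAt F 0 x)
    (H : Set ℝ)
    (hH : LinearIndependent ℚ ((↑) : H → ℝ))
    (hseq : ∃ r : ℕ → ℝ, (∀ n, r n ∈ H ∧ r n ≠ 0) ∧ Tendsto r atTop (nhds 0)) :
    (∀ h : ℝ → ℝ, ContinuousOn h (Icc 0 1) → ∀ ε : ℝ, 0 < ε →
      ∃ g ∈ NonUnitalAlgebra.adjoin ℝ
          {g : ℝ → ℝ | ∃ r ∈ H, g = fun x => Real.exp (r * F x)},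
        ∀ x ∈ Icc (0:ℝ) 1, |h x - g x| < ε) ∧
    (∀ g ∈ NonUnitalAlgebra.adjoin ℝ
        {g : ℝ → ℝ | ∃ r ∈ H, g = fun x => Real.exp (r * F x)},
      (∃ x ∈ Icc (0:ℝ) 1, g x ≠ 0) → StronglySingular g) := by
  refine ⟨fun h hh ε hε => ?_, ?_⟩
  · have hdense := dense_adjoin_expMul (f := ⟨fun x : Icc (0:ℝ) 1 => F x, hFc.domRestrict⟩)
      (fun x y hxy => Subtype.ext (hFm.injOn x.2 y.2 hxy)) hseq
    obtain ⟨φ, hφ, hdist⟩ :=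
      Metric.mem_closure_iff.1 (hdense ⟨fun x => h x, hh.domRestrict⟩) ε hε
    obtain ⟨g, hg, hgφ⟩ := exists_mem_adjoin_eqOn_of_mem_adjoin_expMul hFc hφ
    refine ⟨g, hg, fun x hx => ?_⟩
    rw [hgφ ⟨x, hx⟩, ← Real.dist_eq]
    exact (ContinuousMap.dist_apply_le_dist (⟨x, hx⟩ : Icc (0:ℝ) 1)).trans_lt hdist
  · rintro g hg ⟨x₀, -, hgx₀⟩
    obtain ⟨p, hp, rfl⟩ := exists_expPoly_of_mem_adjoin hg
    have hp0 : p.coeff 0 = 0 := Finsupp.notMem_support_iff.1 fun h0 =>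
      LinearIndepOn.zero_notMem_addSubsemigroupClosure hH
        (AddMonoidAlgebra.support_subset_closure_of_mem_adjoin hp h0)
    refine (hFm.stronglySingular hFc hF').comp (fun x hx => hFsurj ▸ mem_image_of_mem F hx)
      ((analyticOnNhd_expPoly p).contDiff) fun a b hab => expPoly_exists_ne_of_lt ?_ hp0 hab
    rintro rfl
    exact hgx₀ (by simp)

/-- Theorem 3 of the paper. Let `F : [0,1] → [0,1]` be a continuous
strictly increasing surjection with derivative `0` Lebesgue-a.e., and let `H ⊆ ℝ` have
cardinality continuum, be linearly independent over `ℚ`, and contain the terms of a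
sequence of nonzero reals converging to `0`. Then the (non-unital) subalgebra generated by
the functions `x ↦ exp (r * F x)`, `r ∈ H`, is dense in `C([0,1],ℝ)` for the sup norm, and
each of its elements which is nonzero on `[0,1]` is strongly singular. Hence the set of
strongly singular functions is a densely strongly `𝔠`-algebrable subset of `C([0,1],ℝ)`. -/
theorem stronglySingular_densely_strongly_c_algebrable
    (F : ℝ → ℝ) (hFc : ContinuousOn F (Icc 0 1)) (hFm : StrictMonoOn F (Icc 0 1))
    (hFsurj : F '' Icc 0 1 = Icc 0 1)
    (hF' : ∀ᵐ x ∂(volume.restrict (Icc (0:ℝ) 1)), HasDerivAt F 0 x)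
    (H : Set ℝ) (hHcard : Cardinal.mk H = Cardinal.continuum)
    (hH : LinearIndependent ℚ ((↑) : H → ℝ))
    (hseq : ∃ r : ℕ → ℝ, (∀ n, r n ∈ H ∧ r n ≠ 0) ∧ Tendsto r atTop (nhds 0)) :
    (∀ h : ℝ → ℝ, ContinuousOn h (Icc 0 1) → ∀ ε : ℝ, 0 < ε →
      ∃ g ∈ NonUnitalAlgebra.adjoin ℝ
          {g : ℝ → ℝ | ∃ r ∈ H, g = fun x => Real.exp (r * F x)},
        ∀ x ∈ Icc (0:ℝ) 1, |h x - g x| < ε) ∧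
    (∀ g ∈ NonUnitalAlgebra.adjoin ℝ
        {g : ℝ → ℝ | ∃ r ∈ H, g = fun x => Real.exp (r * F x)},
      (∃ x ∈ Icc (0:ℝ) 1, g x ≠ 0) → StronglySingular g) :=
  stronglySingular_densely_strongly_c_algebrable_general F hFc hFm hFsurj hF' H hH hseq
end

section
/- Let f : [0,1] → ℝ be strongly singular, i.e. continuous, of bounded variation, with derivative f′ existing and equal to 0 Lebesgue-almost everywhere on [0,1], and not constant on any nondegenerate subinterval of [0,1]. Then for all a, b ∈ [0,1] with a < b, there exists a point x ∈ [a,b] at which f is not differentiable. -/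
open MeasureTheory Set

/-!
If `f` were differentiable relative to `[0,1]` at every point of `[a,b]`, it would be continuous
on `[a,b]` and differentiable in `(a,b)` with derivative zero almost everywhere. An a.e. vanishing
derivative is integrable, so the fundamental theorem of calculus makes `f` constant on `[a,b]`,
contradicting that `f` is constant on no subinterval.
-/

theorem constant_of_ae_deriv_eq_zero {E : Type*} [NormedAddCommGroup E] [NormedSpace ℝ E]
    [CompleteSpace E] {f : ℝ → E} {a b : ℝ} (hcont : ContinuousOn f (Icc a b))
    (hdiff : ∀ x ∈ Ioo a b, DifferentiableAt ℝ f x)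
    (hderiv : deriv f =ᵐ[volume.restrict (Icc a b)] 0) :
    ∀ x ∈ Icc a b, f x = f a := by
  intro x hx
  have hsub : uIoc a x ⊆ Icc a b := by
    rw [uIoc_of_le hx.1]
    exact Ioc_subset_Icc_self.trans (Icc_subset_Icc_right hx.2)
  have hderiv' : deriv f =ᵐ[volume.restrict (uIoc a x)] 0 :=
    ae_restrict_of_ae_restrict_of_subset hsub hderiv
  have hftc := intervalIntegral.integral_eq_sub_of_hasDerivAt_of_le hx.1
    (hcont.mono (Icc_subset_Icc_right hx.2))
    (fun z hz => (hdiff z ⟨hz.1, hz.2.trans_le hx.2⟩).hasDerivAt)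
    (intervalIntegrable_const.congr_ae hderiv'.symm)
  rw [intervalIntegral.integral_congr_ae_restrict hderiv', Pi.zero_def,
    intervalIntegral.integral_zero] at hftc
  exact sub_eq_zero.mp hftc.symm

theorem stronglySingular_not_differentiable_somewhere_general
    (f : ℝ → ℝ)
    (hd : ∀ᵐ x ∂(volume.restrict (Icc (0:ℝ) 1)), HasDerivAt f 0 x)
    (hnc : ∀ a b : ℝ, 0 ≤ a → a < b → b ≤ 1 → ∃ x ∈ Icc a b, ∃ y ∈ Icc a b, f x ≠ f y) :
    ∀ a b : ℝ, 0 ≤ a → a < b → b ≤ 1 →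
      ∃ x ∈ Icc a b, ¬ DifferentiableWithinAt ℝ f (Icc (0:ℝ) 1) x := by
  intro a b ha hab hb
  by_contra! hdiff
  have hsub : Icc a b ⊆ Icc 0 1 := Icc_subset_Icc ha hb
  have hcont : ContinuousOn f (Icc a b) := fun z hz =>
    (hdiff z hz).continuousWithinAt.mono hsub
  have hdiffAt : ∀ z ∈ Ioo a b, DifferentiableAt ℝ f z := fun z hz =>
    (hdiff z (Ioo_subset_Icc_self hz)).differentiableAt
      (Icc_mem_nhds (ha.trans_lt hz.1) (hz.2.trans_le hb))
  have hderiv : deriv f =ᵐ[volume.restrict (Icc a b)] 0 :=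
    ae_restrict_of_ae_restrict_of_subset hsub (hd.mono fun z hz => hz.deriv)
  obtain ⟨x, hx, y, hy, hxy⟩ := hnc a b ha hab hb
  have hconst := constant_of_ae_deriv_eq_zero hcont hdiffAt hderiv
  exact hxy ((hconst x hx).trans (hconst y hy).symm)

/-- property (I) of strongly singular functions. A strongly singular
function on `[0,1]` is nondifferentiable (relative to `[0,1]`) at some point of every
nondegenerate subinterval `[a,b] ⊆ [0,1]`. -/
theorem stronglySingular_not_differentiable_somewhere
    (f : ℝ → ℝ)
    (hc : ContinuousOn f (Icc 0 1)) (hbv : BoundedVariationOn f (Icc 0 1))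
    (hd : ∀ᵐ x ∂(volume.restrict (Icc (0:ℝ) 1)), HasDerivAt f 0 x)
    (hnc : ∀ a b : ℝ, 0 ≤ a → a < b → b ≤ 1 → ∃ x ∈ Icc a b, ∃ y ∈ Icc a b, f x ≠ f y) :
    ∀ a b : ℝ, 0 ≤ a → a < b → b ≤ 1 →
      ∃ x ∈ Icc a b, ¬ DifferentiableWithinAt ℝ f (Icc (0:ℝ) 1) x :=
  stronglySingular_not_differentiable_somewhere_general f hd hnc
end
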